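/- arXiv:1901.05833 — 7 statements merged into one kernel-verified Lean document; each statement's English description precedes it below -/
import Mathlib

section
/- Let v₁, v₂ ∈ ℍ(ℚ) be linearly independent over ℚ, let L be their ℚ-span, and set a₁ = a₁(v₁,v₂), a₂ = a₂(v₁,v₂). Let α, β ∈ ℍ(ℚ) satisfy Nr(α) = Nr(β) = 1. Then α·x·conj β ∈ L for every x ∈ L if and only if there exists λ ∈ {1, −1} such that α·a₁·conj α = λ·a₁ and β·a₂·conj β = λ·a₂. -/
/-!
Write `a₁ = Im(v₁ v̄₂)` and `a₂ = Im(v̄₂ v₁)`. The span `L` of `v₁, v₂` is exactly the solution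
space of `a₁ y = y a₂`: both `v₁` and `v₂` solve it, and for any solution `y` the quaternion
`y v₁⁻¹` commutes with the nonzero pure quaternion `a₁`, hence lies in `ℚ + ℚ a₁`, so the
solutions form a plane.

If `α a₁ ᾱ = λ a₁` and `β a₂ β̄ = λ a₂`, then `α (a₁ y - y a₂) β̄ = λ (a₁ φy - φy a₂)` for
`φy = α y β̄`, so `φ` preserves `L`. Conversely, if `φ v₁ = a v₁ + b v₂` and `φ v₂ = c v₁ + d v₂`,
then `α a₁ ᾱ = Im(φv₁ · conj φv₂) = (ad - bc) a₁` by bilinearity, likewise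
`β a₂ β̄ = (ad - bc) a₂`, and comparing norms gives `(ad - bc)² = 1`.
-/

open Quaternion

namespace Quaternion

section CommRing

variable {R : Type*} [CommRing R]

theorem re_mul_comm (a b : ℍ[R]) : (a * b).re = (b * a).re := by
  simp only [re_mul]; ring

theorem im_eq_sub_re (a : ℍ[R]) : a.im = a - a.re :=
  eq_sub_of_add_eq' (re_add_im a)

theorem im_mul_star_mul_left (u w : ℍ[R]) : (u * star w).im * u = u * (star w * u).im := by
  rw [im_eq_sub_re, im_eq_sub_re, re_mul_comm (star w) u, sub_mul, mul_sub, coe_commutes,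
    mul_assoc]

theorem im_mul_star_mul_right (u w : ℍ[R]) : (u * star w).im * w = w * (star w * u).im := by
  have h : u * star w * w = w * (star w * u) := by
    rw [mul_assoc, star_mul_self, ← mul_assoc, self_mul_star, coe_commutes]
  rw [im_eq_sub_re, im_eq_sub_re, re_mul_comm (star w) u, sub_mul, mul_sub, coe_commutes, h]

section Unit

variable {γ : ℍ[R]}

theorem star_mul_self_of_normSq_eq_one (hγ : normSq γ = 1) : star γ * γ = 1 := by
  rw [star_mul_self, hγ, coe_one]

theorem self_mul_star_of_normSq_eq_one (hγ : normSq γ = 1) : γ * star γ = 1 := by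
  rw [self_mul_star, hγ, coe_one]

theorem im_mul_mul_star (hγ : normSq γ = 1) (p : ℍ[R]) :
    (γ * p * star γ).im = γ * p.im * star γ := by
  have hre : (γ * p * star γ).re = p.re := by
    rw [re_mul_comm, ← mul_assoc, star_mul_self_of_normSq_eq_one hγ, one_mul]
  rw [im_eq_sub_re, im_eq_sub_re, hre, mul_sub, sub_mul, mul_coe_eq_smul, smul_mul_assoc,
    self_mul_star_of_normSq_eq_one hγ, ← coe_mul_eq_smul, mul_one]

theorem mul_eq_smul_mul_of_conj_eq_smul (hγ : normSq γ = 1) {a : ℍ[R]} {t : R}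
    (h : γ * a * star γ = t • a) : γ * a = t • (a * γ) := by
  rw [← smul_mul_assoc, ← h, mul_assoc _ (star γ), star_mul_self_of_normSq_eq_one hγ, mul_one]

theorem mul_star_eq_smul_star_mul_of_conj_eq_smul (hγ : normSq γ = 1) {a : ℍ[R]} {t : R}
    (h : γ * a * star γ = t • a) : a * star γ = t • (star γ * a) := by
  rw [← mul_smul_comm, ← h, ← mul_assoc, ← mul_assoc, star_mul_self_of_normSq_eq_one hγ,
    one_mul]

end Unit

theorem im_smul_add_mul_star_smul_add (a b c d : R) (u w : ℍ[R]) :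
    ((a • u + b • w) * star (c • u + d • w)).im = (a * d - b * c) • (u * star w).im := by
  have hsw : w * star u = star (u * star w) := by rw [star_mul, star_star]
  simp only [star_add, star_smul, add_mul, mul_add, smul_mul_assoc, mul_smul_comm, hsw, im_add,
    im_smul, self_mul_star, im_coe, im_star, smul_zero, smul_neg]
  module

theorem im_star_smul_add_mul_smul_add (a b c d : R) (u w : ℍ[R]) :
    (star (c • u + d • w) * (a • u + b • w)).im = (a * d - b * c) • (star w * u).im := by
  have hsw : star u * w = star (star w * u) := by rw [star_mul, star_star]
  simp only [star_add, star_smul, add_mul, mul_add, smul_mul_assoc, mul_smul_comm, hsw, im_add,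
    im_smul, star_mul_self, im_coe, im_star, smul_zero, smul_neg]
  module

theorem im_mul_star_conj {α β : ℍ[R]} (hα : normSq α = 1) (hβ : normSq β = 1)
    (u w : ℍ[R]) :
    ((α * u * star β) * star (α * w * star β)).im = α * (u * star w).im * star α := by
  rw [← im_mul_mul_star hα, star_mul, star_mul, star_star]
  congr 1
  simp only [mul_assoc]
  rw [← mul_assoc (star β) β, star_mul_self_of_normSq_eq_one hβ, one_mul]

theorem im_star_mul_conj {α β : ℍ[R]} (hα : normSq α = 1) (hβ : normSq β = 1)
    (u w : ℍ[R]) :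
    (star (α * w * star β) * (α * u * star β)).im = β * (star w * u).im * star β := by
  rw [← im_mul_mul_star hβ, star_mul, star_mul, star_star]
  congr 1
  simp only [mul_assoc]
  rw [← mul_assoc (star α) α, star_mul_self_of_normSq_eq_one hα, one_mul]

theorem mul_mul_sub_mul_mul_star_eq_smul {α β a b : ℍ[R]} {t : R} (hα : normSq α = 1)
    (hβ : normSq β = 1) (ha : α * a * star α = t • a) (hb : β * b * star β = t • b)
    (y : ℍ[R]) :
    α * (a * y - y * b) * star β = t • (a * (α * y * star β) - α * y * star β * b) := by
  calc α * (a * y - y * b) * star β = α * a * y * star β - α * y * (b * star β) := by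
        noncomm_ring
    _ = _ := by
      rw [mul_eq_smul_mul_of_conj_eq_smul hα ha, mul_star_eq_smul_star_mul_of_conj_eq_smul hβ hb]
      simp only [smul_mul_assoc, mul_smul_comm, smul_sub, mul_assoc]

theorem exists_im_ne_zero {b : ℍ[R]} (hre : b.re = 0) (hb : b ≠ 0) :
    b.imI ≠ 0 ∨ b.imJ ≠ 0 ∨ b.imK ≠ 0 := by
  by_contra! h
  exact hb (by ext <;> simp [hre, h.1, h.2.1, h.2.2])

end CommRing

theorem mem_span_one_of_commute {R : Type*} [Field R] [NeZero (2 : R)] {b q : ℍ[R]}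
    (hre : b.re = 0) (hb : b ≠ 0) (h : Commute q b) : q ∈ Submodule.span R {1, b} := by
  -- The imaginary part of `q * b - b * q` is twice the cross product of `q.im` and `b`.
  have eI := congrArg QuaternionAlgebra.imI h.eq
  have eJ := congrArg QuaternionAlgebra.imJ h.eq
  have eK := congrArg QuaternionAlgebra.imK h.eq
  simp only [imI_mul, imJ_mul, imK_mul, hre, mul_zero, zero_mul] at eI eJ eK
  have e1 : q.imJ * b.imK = q.imK * b.imJ := by
    have : (2 : R) * (q.imJ * b.imK - q.imK * b.imJ) = 0 := by linear_combination eI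
    simpa [sub_eq_zero, two_ne_zero] using this
  have e2 : q.imK * b.imI = q.imI * b.imK := by
    have : (2 : R) * (q.imK * b.imI - q.imI * b.imK) = 0 := by linear_combination eJ
    simpa [sub_eq_zero, two_ne_zero] using this
  have e3 : q.imI * b.imJ = q.imJ * b.imI := by
    have : (2 : R) * (q.imI * b.imJ - q.imJ * b.imI) = 0 := by linear_combination eK
    simpa [sub_eq_zero, two_ne_zero] using this
  rw [Submodule.mem_span_pair]
  rcases exists_im_ne_zero hre hb with h | h | h
  · refine ⟨q.re, q.imI / b.imI, ?_⟩
    ext <;> simp [hre] <;> field_simp <;> grind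
  · refine ⟨q.re, q.imJ / b.imJ, ?_⟩
    ext <;> simp [hre] <;> field_simp <;> grind
  · refine ⟨q.re, q.imK / b.imK, ?_⟩
    ext <;> simp [hre] <;> field_simp <;> grind

section LinearOrderedField

variable {R : Type*} [Field R] [LinearOrder R] [IsStrictOrderedRing R]

theorem im_mul_star_ne_zero {u w : ℍ[R]} (h : LinearIndependent R ![u, w]) :
    (u * star w).im ≠ 0 := by
  have hw : w ≠ 0 := (linearIndependent_fin2.mp h).1
  intro him
  obtain ⟨r, hr⟩ : ∃ r : R, u * star w = r :=
    ⟨(u * star w).re, by simpa [him] using (re_add_im (u * star w)).symm⟩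
  have hdep : normSq w • u + (-r) • w = 0 := by
    rw [← mul_coe_eq_smul, ← star_mul_self, ← mul_assoc, hr, coe_mul_eq_smul, neg_smul,
      add_neg_cancel]
  exact normSq_ne_zero.mpr hw (LinearIndependent.pair_iff.mp h _ _ hdep).1

theorem mem_span_mul_of_mul_eq_mul {a b u y : ℍ[R]} (hre : a.re = 0) (ha : a ≠ 0) (hu : u ≠ 0)
    (hau : a * u = u * b) (hay : a * y = y * b) : y ∈ Submodule.span R {u, a * u} := by
  have hb : b * u⁻¹ = u⁻¹ * a := by
    rw [eq_inv_mul_iff_mul_eq₀ hu, ← mul_assoc, ← hau, mul_assoc, mul_inv_cancel₀ hu,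
      mul_one]
  have hcomm : Commute (y * u⁻¹) a := by
    rw [Commute, SemiconjBy, mul_assoc y, ← hb, ← mul_assoc, ← hay, mul_assoc]
  obtain ⟨s, t, hst⟩ := Submodule.mem_span_pair.mp (mem_span_one_of_commute hre ha hcomm)
  refine Submodule.mem_span_pair.mpr ⟨s, t, ?_⟩
  rw [← inv_mul_cancel_right₀ hu y, ← hst, add_mul, smul_mul_assoc, one_mul, smul_mul_assoc]

theorem eq_one_or_eq_neg_one_of_conj_eq_smul {γ a : ℍ[R]} {t : R} (hγ : normSq γ = 1)
    (ha : a ≠ 0) (h : γ * a * star γ = t • a) : t = 1 ∨ t = -1 := by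
  have hnorm := congrArg normSq h
  rw [map_mul, map_mul, normSq_star, hγ, one_mul, mul_one, normSq_smul] at hnorm
  have ht : t ^ 2 = 1 := mul_right_cancel₀ (normSq_ne_zero.mpr ha) (by rw [one_mul, ← hnorm])
  exact sq_eq_one_iff.mp ht

theorem mem_span_pair_iff_im_mul_star_mul_eq {u w y : ℍ[R]} (h : LinearIndependent R ![u, w]) :
    y ∈ Submodule.span R {u, w} ↔ (u * star w).im * y = y * (star w * u).im := by
  constructor
  · intro hy
    induction hy using Submodule.span_induction with
    | mem y hy =>
      rcases hy with rfl | rfl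
      · exact im_mul_star_mul_left y w
      · exact im_mul_star_mul_right u y
    | zero => simp
    | add y z _ _ hy hz => rw [mul_add, add_mul, hy, hz]
    | smul c y _ hy => rw [mul_smul_comm, hy, smul_mul_assoc]
  · intro hy
    have hspan : ∀ z, (u * star w).im * z = z * (star w * u).im →
        z ∈ Submodule.span R {u, (u * star w).im * u} :=
      fun z ↦ mem_span_mul_of_mul_eq_mul (re_im _) (im_mul_star_ne_zero h) (h.ne_zero 0)
        (im_mul_star_mul_left u w)
    suffices hau : (u * star w).im * u ∈ Submodule.span R {u, w} from
      Submodule.span_le.mpr (Set.insert_subset_iff.mpr ⟨Submodule.subset_span (by simp),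
        Set.singleton_subset_iff.mpr hau⟩) (hspan y hy)
    obtain ⟨s, t, hw⟩ := Submodule.mem_span_pair.mp (hspan w (im_mul_star_mul_right u w))
    have ht : t ≠ 0 := by
      rintro rfl
      have hdep : s • u + (-1 : R) • w = 0 := by
        rw [← hw, zero_smul, add_zero, neg_one_smul, add_neg_cancel]
      exact one_ne_zero (neg_eq_zero.mp (LinearIndependent.pair_iff.mp h _ _ hdep).2)
    have hau : (u * star w).im * u = t⁻¹ • (w - s • u) := by
      rw [eq_inv_smul_iff₀ ht, eq_sub_of_add_eq' hw]
    rw [hau]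
    exact Submodule.smul_mem _ _ (Submodule.sub_mem _ (Submodule.subset_span (by simp))
      (Submodule.smul_mem _ _ (Submodule.subset_span (by simp))))

end LinearOrderedField

end Quaternion

/-- Let `v₁, v₂ ∈ ℍ(ℚ)` be linearly independent, `L` their `ℚ`-span, and
`a₁ = Im(v₁ conj v₂)`, `a₂ = Im(conj v₂ * v₁)`.  If `Nr α = Nr β = 1`, then
`x ↦ α x conj β` preserves `L` iff there is `λ ∈ {1, -1}` with
`α a₁ conj α = λ a₁` and `β a₂ conj β = λ a₂`. -/
theorem stmt_2 (v₁ v₂ : ℍ[ℚ]) (hli : LinearIndependent ℚ ![v₁, v₂])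
    (α β : ℍ[ℚ]) (hα : Quaternion.normSq α = 1) (hβ : Quaternion.normSq β = 1) :
    (∀ x ∈ Submodule.span ℚ ({v₁, v₂} : Set ℍ[ℚ]),
        α * x * star β ∈ Submodule.span ℚ ({v₁, v₂} : Set ℍ[ℚ])) ↔
      ∃ lam : ℚ, (lam = 1 ∨ lam = -1) ∧
        α * (v₁ * star v₂).im * star α = lam • (v₁ * star v₂).im ∧
        β * (star v₂ * v₁).im * star β = lam • (star v₂ * v₁).im := by
  constructor
  · intro H
    obtain ⟨a, b, h₁⟩ := Submodule.mem_span_pair.mp (H v₁ (Submodule.subset_span (by simp)))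
    obtain ⟨c, d, h₂⟩ := Submodule.mem_span_pair.mp (H v₂ (Submodule.subset_span (by simp)))
    have ha₁ : α * (v₁ * star v₂).im * star α = (a * d - b * c) • (v₁ * star v₂).im := by
      rw [← im_mul_star_conj hα hβ, ← h₁, ← h₂, im_smul_add_mul_star_smul_add]
    have ha₂ : β * (star v₂ * v₁).im * star β = (a * d - b * c) • (star v₂ * v₁).im := by
      rw [← im_star_mul_conj hα hβ, ← h₁, ← h₂, im_star_smul_add_mul_smul_add]
    exact ⟨a * d - b * c,
      eq_one_or_eq_neg_one_of_conj_eq_smul hα (im_mul_star_ne_zero hli) ha₁, ha₁, ha₂⟩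
  · rintro ⟨t, ht, ha₁, ha₂⟩ x hx
    rw [mem_span_pair_iff_im_mul_star_mul_eq hli] at hx ⊢
    have hconj := mul_mul_sub_mul_mul_star_eq_smul hα hβ ha₁ ha₂ x
    rw [hx, sub_self, mul_zero, zero_mul, eq_comm, smul_eq_zero, sub_eq_zero] at hconj
    exact hconj.resolve_left (by rcases ht with rfl | rfl <;> norm_num)
end

section
/- Let v₁, v₂ ∈ ℍ(ℚ) be linearly independent over ℚ and let L be their ℚ-span. Then {x ∈ ℍ(ℚ) : a₁(v₁,v₂)·x = −x·a₂(v₁,v₂)} is exactly the orthogonal complement {x ∈ ℍ(ℚ) : ⟨x,w⟩ = 0 for all w ∈ L} of L with respect to the standard inner product. -/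
open Quaternion

lemma stmt_4_key (v₁ v₂ x : ℍ[ℚ]) :
    (v₁ * star v₂).im * x + x * (star v₂ * v₁).im =
      (2 * (x * star v₂).re) • v₁ - (2 * (x * star v₁).re) • v₂ := by
  ext <;> simp [Quaternion.ext_iff] <;> ring

/-- For linearly independent `v₁, v₂ ∈ ℍ(ℚ)` with `ℚ`-span `L`, the set
`{x : a₁(v₁,v₂) * x = - x * a₂(v₁,v₂)}` is exactly the orthogonal complement of `L` with
respect to the standard inner product `⟨x,w⟩ = re (x * conj w)`; here
`a₁(v₁,v₂) = Im(v₁ conj v₂)` and `a₂(v₁,v₂) = Im(conj v₂ * v₁)`. -/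
theorem stmt_4 (v₁ v₂ : ℍ[ℚ]) (hli : LinearIndependent ℚ ![v₁, v₂]) :
    {x : ℍ[ℚ] | (v₁ * star v₂).im * x = -(x * (star v₂ * v₁).im)} =
      {x : ℍ[ℚ] | ∀ w ∈ Submodule.span ℚ ({v₁, v₂} : Set ℍ[ℚ]), (x * star w).re = 0} := by
  rw [LinearIndependent.pair_iff] at hli
  ext x
  simp only [Set.mem_setOf_eq]
  constructor
  · intro h
    have h0 : (2 * (x * star v₂).re) • v₁ + (-(2 * (x * star v₁).re)) • v₂ = 0 := by
      rw [neg_smul, ← sub_eq_add_neg, ← stmt_4_key, h]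
      exact neg_add_cancel _
    obtain ⟨h1, h2⟩ := hli _ _ h0
    have hb : (x * star v₂).re = 0 := by linarith
    have ha : (x * star v₁).re = 0 := by linarith
    intro w hw
    induction hw using Submodule.span_induction with
    | mem w hw =>
      simp only [Set.mem_insert_iff, Set.mem_singleton_iff] at hw
      rcases hw with rfl | rfl
      · exact ha
      · exact hb
    | zero => simp
    | add y z _ _ hy hz => simp [star_add, mul_add, hy, hz]
    | smul c y _ hy => simp [Quaternion.star_smul, mul_smul_comm, hy]
  · intro h
    have h1 := h v₁ (Submodule.subset_span (by simp))
    have h2 := h v₂ (Submodule.subset_span (by simp))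
    have := stmt_4_key v₁ v₂ x
    rw [h1, h2] at this
    simp only [mul_zero, zero_smul, sub_zero] at this
    linear_combination (norm := module) this
end

section
/- For every 2-dimensional ℚ-subspace L ⊆ ℚ⁴, the orthogonal complement L^⊥ = {x ∈ ℚ⁴ : ⟨x,w⟩ = 0 for all w ∈ L} satisfies disc(L^⊥) = disc(L). -/
/-- The standard inner product on `ℚ⁴`. -/
def innerQ4 (x y : Fin 4 → ℚ) : ℚ := ∑ i, x i * y i

/-- A vector of `ℚ⁴` lies in `ℤ⁴`. -/
def IsIntVec (x : Fin 4 → ℚ) : Prop := ∀ i, ∃ n : ℤ, x i = n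

/-- `(v₁, v₂)` is a `ℤ`-basis of the lattice `L ∩ ℤ⁴`. -/
def IsZBasisOf (L : Submodule ℚ (Fin 4 → ℚ)) (v₁ v₂ : Fin 4 → ℚ) : Prop :=
  v₁ ∈ L ∧ v₂ ∈ L ∧ IsIntVec v₁ ∧ IsIntVec v₂ ∧ LinearIndependent ℚ ![v₁, v₂] ∧
    ∀ x ∈ L, IsIntVec x → ∃ m n : ℤ, x = (m : ℚ) • v₁ + (n : ℚ) • v₂

/-- The determinant of the Gram matrix of the pair `(v₁, v₂)` with respect to the standard
inner product (the discriminant of the plane, when computed on a `ℤ`-basis of its lattice). -/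
def gramDet (v₁ v₂ : Fin 4 → ℚ) : ℚ :=
  innerQ4 v₁ v₁ * innerQ4 v₂ v₂ - innerQ4 v₁ v₂ ^ 2

/-- rational 2×2 minor -/
def mq (a b : Fin 4 → ℚ) (i j : Fin 4) : ℚ := a i * b j - a j * b i

/-- integer 2×2 minor -/
def mzi (A B : Fin 4 → ℤ) (i j : Fin 4) : ℤ := A i * B j - A j * B i

/-- gcd of six naturals -/
def gcd6 (a b c d e f : ℕ) : ℕ := Nat.gcd a (Nat.gcd b (Nat.gcd c (Nat.gcd d (Nat.gcd e f))))

lemma gcd6_mul (k a b c d e f : ℕ) :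
    gcd6 (k*a) (k*b) (k*c) (k*d) (k*e) (k*f) = k * gcd6 a b c d e f := by
  simp [gcd6, Nat.gcd_mul_left]

lemma dvd_gcd6 {k a b c d e f : ℕ} (h1 : k ∣ a) (h2 : k ∣ b) (h3 : k ∣ c) (h4 : k ∣ d)
    (h5 : k ∣ e) (h6 : k ∣ f) : k ∣ gcd6 a b c d e f :=
  Nat.dvd_gcd h1 (Nat.dvd_gcd h2 (Nat.dvd_gcd h3 (Nat.dvd_gcd h4 (Nat.dvd_gcd h5 h6))))

lemma gcd6_dvd {a b c d e f : ℕ} :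
    gcd6 a b c d e f ∣ a ∧ gcd6 a b c d e f ∣ b ∧ gcd6 a b c d e f ∣ c ∧
    gcd6 a b c d e f ∣ d ∧ gcd6 a b c d e f ∣ e ∧ gcd6 a b c d e f ∣ f := by
  unfold gcd6
  refine ⟨Nat.gcd_dvd_left _ _, ?_, ?_, ?_, ?_, ?_⟩
  · exact (Nat.gcd_dvd_right _ _).trans (Nat.gcd_dvd_left _ _)
  · exact (Nat.gcd_dvd_right _ _).trans ((Nat.gcd_dvd_right _ _).trans (Nat.gcd_dvd_left _ _))
  · exact (Nat.gcd_dvd_right _ _).trans ((Nat.gcd_dvd_right _ _).trans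
      ((Nat.gcd_dvd_right _ _).trans (Nat.gcd_dvd_left _ _)))
  · exact (Nat.gcd_dvd_right _ _).trans ((Nat.gcd_dvd_right _ _).trans
      ((Nat.gcd_dvd_right _ _).trans ((Nat.gcd_dvd_right _ _).trans (Nat.gcd_dvd_left _ _))))
  · exact (Nat.gcd_dvd_right _ _).trans ((Nat.gcd_dvd_right _ _).trans
      ((Nat.gcd_dvd_right _ _).trans ((Nat.gcd_dvd_right _ _).trans (Nat.gcd_dvd_right _ _))))

lemma gcd6_rev (a b c d e f : ℕ) : gcd6 a b c d e f = gcd6 f e d c b a := by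
  obtain ⟨h1, h2, h3, h4, h5, h6⟩ := gcd6_dvd (a := a) (b := b) (c := c) (d := d) (e := e) (f := f)
  obtain ⟨g1, g2, g3, g4, g5, g6⟩ := gcd6_dvd (a := f) (b := e) (c := d) (d := c) (e := b) (f := a)
  exact Nat.dvd_antisymm (dvd_gcd6 h6 h5 h4 h3 h2 h1) (dvd_gcd6 g6 g5 g4 g3 g2 g1)

lemma pair_indep {v₁ v₂ : Fin 4 → ℚ} (h : LinearIndependent ℚ ![v₁, v₂])
    {a b : ℚ} (hab : a • v₁ + b • v₂ = 0) : a = 0 ∧ b = 0 := by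
  have key := Fintype.linearIndependent_iff.mp h ![a, b] (by
    simpa [Fin.sum_univ_two] using hab)
  exact ⟨key 0, key 1⟩

lemma int_dvd_of_natAbs {p : ℕ} {x : ℤ} (h : p ∣ x.natAbs) : (p : ℤ) ∣ x :=
  Int.natAbs_dvd_natAbs.mp (by simpa using h)

lemma sq_eq_of_cross (a b q1 q2 q3 q4 q5 q6 d1 d2 d3 d4 d5 d6 : ℤ)
    (hq : gcd6 q1.natAbs q2.natAbs q3.natAbs q4.natAbs q5.natAbs q6.natAbs = 1)
    (hd : gcd6 d1.natAbs d2.natAbs d3.natAbs d4.natAbs d5.natAbs d6.natAbs = 1)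
    (h1 : a * d1 = b * q1) (h2 : a * d2 = b * q2) (h3 : a * d3 = b * q3)
    (h4 : a * d4 = b * q4) (h5 : a * d5 = b * q5) (h6 : a * d6 = b * q6) :
    a ^ 2 = b ^ 2 := by
  have key : a.natAbs = b.natAbs := by
    have e1 : a.natAbs * gcd6 d1.natAbs d2.natAbs d3.natAbs d4.natAbs d5.natAbs d6.natAbs
        = b.natAbs * gcd6 q1.natAbs q2.natAbs q3.natAbs q4.natAbs q5.natAbs q6.natAbs := by
      rw [← gcd6_mul, ← gcd6_mul]
      simp only [← Int.natAbs_mul, h1, h2, h3, h4, h5, h6]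
    simpa [hq, hd] using e1
  rcases Int.natAbs_eq_natAbs_iff.mp key with h | h <;> rw [h] <;> ring

/-- Primitivity: the gcd of the six minors of a `ℤ`-basis of `L ∩ ℤ⁴` is 1. -/
lemma prim_lemma (L : Submodule ℚ (Fin 4 → ℚ)) (v₁ v₂ : Fin 4 → ℚ)
    (hv : IsZBasisOf L v₁ v₂) (V1 V2 : Fin 4 → ℤ)
    (hc1 : ∀ i, v₁ i = (V1 i : ℚ)) (hc2 : ∀ i, v₂ i = (V2 i : ℚ)) :
    gcd6 (mzi V1 V2 0 1).natAbs (mzi V1 V2 0 2).natAbs (mzi V1 V2 0 3).natAbs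
      (mzi V1 V2 1 2).natAbs (mzi V1 V2 1 3).natAbs (mzi V1 V2 2 3).natAbs = 1 := by
  by_contra hne
  obtain ⟨p, hp, hdvd⟩ := Nat.exists_prime_and_dvd hne
  obtain ⟨g1, g2, g3, g4, g5, g6⟩ := gcd6_dvd (a := (mzi V1 V2 0 1).natAbs)
    (b := (mzi V1 V2 0 2).natAbs) (c := (mzi V1 V2 0 3).natAbs)
    (d := (mzi V1 V2 1 2).natAbs) (e := (mzi V1 V2 1 3).natAbs) (f := (mzi V1 V2 2 3).natAbs)
  have h01 : (p : ℤ) ∣ mzi V1 V2 0 1 := int_dvd_of_natAbs (hdvd.trans g1)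
  have h02 : (p : ℤ) ∣ mzi V1 V2 0 2 := int_dvd_of_natAbs (hdvd.trans g2)
  have h03 : (p : ℤ) ∣ mzi V1 V2 0 3 := int_dvd_of_natAbs (hdvd.trans g3)
  have h12 : (p : ℤ) ∣ mzi V1 V2 1 2 := int_dvd_of_natAbs (hdvd.trans g4)
  have h13 : (p : ℤ) ∣ mzi V1 V2 1 3 := int_dvd_of_natAbs (hdvd.trans g5)
  have h23 : (p : ℤ) ∣ mzi V1 V2 2 3 := int_dvd_of_natAbs (hdvd.trans g6)
  have e : ∀ i j : Fin 4, (p : ℤ) ∣ mzi V1 V2 i j → (p : ℤ) ∣ mzi V1 V2 j i := by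
    intro i j h
    have : mzi V1 V2 j i = -(mzi V1 V2 i j) := by simp only [mzi]; ring
    rw [this]
    exact dvd_neg.mpr h
  have hall : ∀ i j : Fin 4, (p : ℤ) ∣ mzi V1 V2 i j := by
    intro i j
    fin_cases i <;> fin_cases j <;>
      first
        | exact h01 | exact h02 | exact h03 | exact h12 | exact h13 | exact h23
        | exact e _ _ h01 | exact e _ _ h02 | exact e _ _ h03
        | exact e _ _ h12 | exact e _ _ h13 | exact e _ _ h23
        | (simp [mzi])
  have hpQ : (p : ℚ) ≠ 0 := Nat.cast_ne_zero.mpr hp.pos.ne'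
  by_cases hcase : ∀ i, (p : ℤ) ∣ V1 i
  · -- v₁ / p is an integer vector in L
    choose c hc using hcase
    set x : Fin 4 → ℚ := fun i => ((c i : ℤ) : ℚ) with hxdef
    have hxv : x = (1 / (p : ℚ)) • v₁ := by
      funext i
      simp only [hxdef, Pi.smul_apply, smul_eq_mul]
      rw [hc1 i, hc i]
      push_cast
      field_simp
    have hxL : x ∈ L := by rw [hxv]; exact L.smul_mem _ hv.1
    have hxint : IsIntVec x := fun i => ⟨c i, rfl⟩
    obtain ⟨m, n, hx⟩ := hv.2.2.2.2.2 x hxL hxint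
    have h0 : ((m : ℚ) - 1 / (p : ℚ)) • v₁ + (n : ℚ) • v₂ = 0 := by
      have hmod : ((m : ℚ) - 1 / (p : ℚ)) • v₁ + (n : ℚ) • v₂
          = ((m : ℚ) • v₁ + (n : ℚ) • v₂) - (1 / (p : ℚ)) • v₁ := by module
      rw [hmod, ← hx, ← hxv, sub_self]
    obtain ⟨hm, -⟩ := pair_indep hv.2.2.2.2.1 h0
    rw [sub_eq_zero, eq_div_iff hpQ] at hm
    have hZ : m * (p : ℤ) = 1 := by exact_mod_cast hm
    have hdvd1 : (p : ℤ) ∣ 1 := ⟨m, by linarith⟩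
    have := Int.le_of_dvd one_pos hdvd1
    have := hp.two_le
    omega
  · push_neg at hcase
    obtain ⟨i, hi⟩ := hcase
    have hdiv : ∀ j, (p : ℤ) ∣ (V2 i * V1 j - V1 i * V2 j) := by
      intro j
      have : V2 i * V1 j - V1 i * V2 j = -(mzi V1 V2 i j) := by simp only [mzi]; ring
      rw [this]
      exact dvd_neg.mpr (hall i j)
    choose c hc using hdiv
    set x : Fin 4 → ℚ := fun j => ((c j : ℤ) : ℚ) with hxdef
    have hxv : x = ((V2 i : ℚ) / (p : ℚ)) • v₁ + (-(V1 i : ℚ) / (p : ℚ)) • v₂ := by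
      funext j
      simp only [hxdef, Pi.add_apply, Pi.smul_apply, smul_eq_mul]
      rw [hc1 j, hc2 j]
      have hQ : (V2 i : ℚ) * (V1 j : ℚ) - (V1 i : ℚ) * (V2 j : ℚ) = (p : ℚ) * (c j : ℚ) := by
        exact_mod_cast hc j
      field_simp
      linear_combination -hQ
    have hxL : x ∈ L := by
      rw [hxv]
      exact Submodule.add_mem _ (L.smul_mem _ hv.1) (L.smul_mem _ hv.2.1)
    have hxint : IsIntVec x := fun j => ⟨c j, rfl⟩
    obtain ⟨m, n, hx⟩ := hv.2.2.2.2.2 x hxL hxint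
    have h0 : ((V2 i : ℚ) / (p : ℚ) - (m : ℚ)) • v₁ + (-(V1 i : ℚ) / (p : ℚ) - (n : ℚ)) • v₂ = 0 := by
      have hmod : ((V2 i : ℚ) / (p : ℚ) - (m : ℚ)) • v₁ + (-(V1 i : ℚ) / (p : ℚ) - (n : ℚ)) • v₂
          = (((V2 i : ℚ) / (p : ℚ)) • v₁ + (-(V1 i : ℚ) / (p : ℚ)) • v₂)
            - ((m : ℚ) • v₁ + (n : ℚ) • v₂) := by module
      rw [hmod, ← hxv, ← hx, sub_self]
    obtain ⟨-, hn⟩ := pair_indep hv.2.2.2.2.1 h0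
    rw [sub_eq_zero, div_eq_iff hpQ] at hn
    have hZ : -(V1 i) = n * p := by exact_mod_cast hn
    exact hi ⟨-n, by linarith⟩

/-- For every 2-dimensional `ℚ`-subspace `L ⊆ ℚ⁴`, the orthogonal complement
`L^⊥` satisfies `disc (L^⊥) = disc L`: the Gram determinant of any `ℤ`-basis of `L^⊥ ∩ ℤ⁴`
equals that of any `ℤ`-basis of `L ∩ ℤ⁴`. -/
theorem stmt_7 (L : Submodule ℚ (Fin 4 → ℚ)) (hdim : Module.finrank ℚ L = 2)
    (Lperp : Submodule ℚ (Fin 4 → ℚ))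
    (hperp : ∀ x : Fin 4 → ℚ, x ∈ Lperp ↔ ∀ w ∈ L, innerQ4 x w = 0)
    (v₁ v₂ w₁ w₂ : Fin 4 → ℚ)
    (hv : IsZBasisOf L v₁ v₂) (hw : IsZBasisOf Lperp w₁ w₂) :
    gramDet w₁ w₂ = gramDet v₁ v₂ := by
  -- orthogonality relations
  have o11 : innerQ4 w₁ v₁ = 0 := (hperp w₁).mp hw.1 v₁ hv.1
  have o12 : innerQ4 w₁ v₂ = 0 := (hperp w₁).mp hw.1 v₂ hv.2.1
  have o21 : innerQ4 w₂ v₁ = 0 := (hperp w₂).mp hw.2.1 v₁ hv.1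
  have o22 : innerQ4 w₂ v₂ = 0 := (hperp w₂).mp hw.2.1 v₂ hv.2.1
  simp only [innerQ4, Fin.sum_univ_four] at o11 o12 o21 o22
  -- the matrix product of the two antisymmetric minor matrices vanishes
  have hkey : ∀ k l : Fin 4,
      (v₁ k * v₂ 0 - v₁ 0 * v₂ k) * (w₁ 0 * w₂ l - w₁ l * w₂ 0) +
      (v₁ k * v₂ 1 - v₁ 1 * v₂ k) * (w₁ 1 * w₂ l - w₁ l * w₂ 1) +
      (v₁ k * v₂ 2 - v₁ 2 * v₂ k) * (w₁ 2 * w₂ l - w₁ l * w₂ 2) +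
      (v₁ k * v₂ 3 - v₁ 3 * v₂ k) * (w₁ 3 * w₂ l - w₁ l * w₂ 3) = 0 := by
    intro k l
    linear_combination (v₁ k * w₂ l) * o12 - (v₁ k * w₁ l) * o22
      - (v₂ k * w₂ l) * o11 + (v₂ k * w₁ l) * o21
  -- integer representatives
  choose V1 hV1 using hv.2.2.1
  choose V2 hV2 using hv.2.2.2.1
  choose W1 hW1 using hw.2.2.1
  choose W2 hW2 using hw.2.2.2.1
  have castv : ∀ i j : Fin 4, ((mzi V1 V2 i j : ℤ) : ℚ) = mq v₁ v₂ i j := by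
    intro i j
    simp only [mzi, mq, hV1, hV2]
    push_cast
    ring
  have castw : ∀ i j : Fin 4, ((mzi W1 W2 i j : ℤ) : ℚ) = mq w₁ w₂ i j := by
    intro i j
    simp only [mzi, mq, hW1, hW2]
    push_cast
    ring
  -- primitivity of both lattices
  have hPv := prim_lemma L v₁ v₂ hv V1 V2 hV1 hV2
  have hPw := prim_lemma Lperp w₁ w₂ hw W1 W2 hW1 hW2
  have hdv : gcd6 (mzi V1 V2 2 3).natAbs (-(mzi V1 V2 1 3)).natAbs (mzi V1 V2 1 2).natAbs
      (mzi V1 V2 0 3).natAbs (-(mzi V1 V2 0 2)).natAbs (mzi V1 V2 0 1).natAbs = 1 := by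
    simp only [Int.natAbs_neg]
    rw [gcd6_rev]
    exact hPv
  have cAB : (mq w₁ w₂ 0 1) * (-(mq v₁ v₂ 1 3)) = (mq w₁ w₂ 0 2) * (mq v₁ v₂ 2 3) := by
    simp only [mq]
    linear_combination (-1/1 : ℚ) * hkey 3 0
  have zAB : (mzi W1 W2 0 1) * (-(mzi V1 V2 1 3)) = (mzi W1 W2 0 2) * (mzi V1 V2 2 3) := by
    have h := cAB
    simp only [mq, hV1, hV2, hW1, hW2] at h
    simp only [mzi]
    exact_mod_cast h
  have cAC : (mq w₁ w₂ 0 1) * (mq v₁ v₂ 1 2) = (mq w₁ w₂ 0 3) * (mq v₁ v₂ 2 3) := by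
    simp only [mq]
    linear_combination (1/1 : ℚ) * hkey 2 0
  have zAC : (mzi W1 W2 0 1) * (mzi V1 V2 1 2) = (mzi W1 W2 0 3) * (mzi V1 V2 2 3) := by
    have h := cAC
    simp only [mq, hV1, hV2, hW1, hW2] at h
    simp only [mzi]
    exact_mod_cast h
  have cAD : (mq w₁ w₂ 0 1) * (mq v₁ v₂ 0 3) = (mq w₁ w₂ 1 2) * (mq v₁ v₂ 2 3) := by
    simp only [mq]
    linear_combination (-1/1 : ℚ) * hkey 3 1
  have zAD : (mzi W1 W2 0 1) * (mzi V1 V2 0 3) = (mzi W1 W2 1 2) * (mzi V1 V2 2 3) := by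
    have h := cAD
    simp only [mq, hV1, hV2, hW1, hW2] at h
    simp only [mzi]
    exact_mod_cast h
  have cAE : (mq w₁ w₂ 0 1) * (-(mq v₁ v₂ 0 2)) = (mq w₁ w₂ 1 3) * (mq v₁ v₂ 2 3) := by
    simp only [mq]
    linear_combination (1/1 : ℚ) * hkey 2 1
  have zAE : (mzi W1 W2 0 1) * (-(mzi V1 V2 0 2)) = (mzi W1 W2 1 3) * (mzi V1 V2 2 3) := by
    have h := cAE
    simp only [mq, hV1, hV2, hW1, hW2] at h
    simp only [mzi]
    exact_mod_cast h
  have cAF : (mq w₁ w₂ 0 1) * (mq v₁ v₂ 0 1) = (mq w₁ w₂ 2 3) * (mq v₁ v₂ 2 3) := by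
    simp only [mq]
    linear_combination (-1/2 : ℚ) * hkey 0 0 + (-1/2 : ℚ) * hkey 1 1 + (1/2 : ℚ) * hkey 2 2 + (1/2 : ℚ) * hkey 3 3
  have zAF : (mzi W1 W2 0 1) * (mzi V1 V2 0 1) = (mzi W1 W2 2 3) * (mzi V1 V2 2 3) := by
    have h := cAF
    simp only [mq, hV1, hV2, hW1, hW2] at h
    simp only [mzi]
    exact_mod_cast h
  have cBC : (mq w₁ w₂ 0 2) * (mq v₁ v₂ 1 2) = (mq w₁ w₂ 0 3) * (-(mq v₁ v₂ 1 3)) := by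
    simp only [mq]
    linear_combination (-1/1 : ℚ) * hkey 1 0
  have zBC : (mzi W1 W2 0 2) * (mzi V1 V2 1 2) = (mzi W1 W2 0 3) * (-(mzi V1 V2 1 3)) := by
    have h := cBC
    simp only [mq, hV1, hV2, hW1, hW2] at h
    simp only [mzi]
    exact_mod_cast h
  have cBD : (mq w₁ w₂ 0 2) * (mq v₁ v₂ 0 3) = (mq w₁ w₂ 1 2) * (-(mq v₁ v₂ 1 3)) := by
    simp only [mq]
    linear_combination (-1/1 : ℚ) * hkey 3 2
  have zBD : (mzi W1 W2 0 2) * (mzi V1 V2 0 3) = (mzi W1 W2 1 2) * (-(mzi V1 V2 1 3)) := by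
    have h := cBD
    simp only [mq, hV1, hV2, hW1, hW2] at h
    simp only [mzi]
    exact_mod_cast h
  have cBE : (mq w₁ w₂ 0 2) * (-(mq v₁ v₂ 0 2)) = (mq w₁ w₂ 1 3) * (-(mq v₁ v₂ 1 3)) := by
    simp only [mq]
    linear_combination (1/2 : ℚ) * hkey 0 0 + (-1/2 : ℚ) * hkey 1 1 + (1/2 : ℚ) * hkey 2 2 + (-1/2 : ℚ) * hkey 3 3
  have zBE : (mzi W1 W2 0 2) * (-(mzi V1 V2 0 2)) = (mzi W1 W2 1 3) * (-(mzi V1 V2 1 3)) := by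
    have h := cBE
    simp only [mq, hV1, hV2, hW1, hW2] at h
    simp only [mzi]
    exact_mod_cast h
  have cBF : (mq w₁ w₂ 0 2) * (mq v₁ v₂ 0 1) = (mq w₁ w₂ 2 3) * (-(mq v₁ v₂ 1 3)) := by
    simp only [mq]
    linear_combination (-1/1 : ℚ) * hkey 1 2
  have zBF : (mzi W1 W2 0 2) * (mzi V1 V2 0 1) = (mzi W1 W2 2 3) * (-(mzi V1 V2 1 3)) := by
    have h := cBF
    simp only [mq, hV1, hV2, hW1, hW2] at h
    simp only [mzi]
    exact_mod_cast h
  have cCD : (mq w₁ w₂ 0 3) * (mq v₁ v₂ 0 3) = (mq w₁ w₂ 1 2) * (mq v₁ v₂ 1 2) := by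
    simp only [mq]
    linear_combination (-1/2 : ℚ) * hkey 0 0 + (1/2 : ℚ) * hkey 1 1 + (1/2 : ℚ) * hkey 2 2 + (-1/2 : ℚ) * hkey 3 3
  have zCD : (mzi W1 W2 0 3) * (mzi V1 V2 0 3) = (mzi W1 W2 1 2) * (mzi V1 V2 1 2) := by
    have h := cCD
    simp only [mq, hV1, hV2, hW1, hW2] at h
    simp only [mzi]
    exact_mod_cast h
  have cCE : (mq w₁ w₂ 0 3) * (-(mq v₁ v₂ 0 2)) = (mq w₁ w₂ 1 3) * (mq v₁ v₂ 1 2) := by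
    simp only [mq]
    linear_combination (1/1 : ℚ) * hkey 2 3
  have zCE : (mzi W1 W2 0 3) * (-(mzi V1 V2 0 2)) = (mzi W1 W2 1 3) * (mzi V1 V2 1 2) := by
    have h := cCE
    simp only [mq, hV1, hV2, hW1, hW2] at h
    simp only [mzi]
    exact_mod_cast h
  have cCF : (mq w₁ w₂ 0 3) * (mq v₁ v₂ 0 1) = (mq w₁ w₂ 2 3) * (mq v₁ v₂ 1 2) := by
    simp only [mq]
    linear_combination (-1/1 : ℚ) * hkey 1 3
  have zCF : (mzi W1 W2 0 3) * (mzi V1 V2 0 1) = (mzi W1 W2 2 3) * (mzi V1 V2 1 2) := by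
    have h := cCF
    simp only [mq, hV1, hV2, hW1, hW2] at h
    simp only [mzi]
    exact_mod_cast h
  have cDE : (mq w₁ w₂ 1 2) * (-(mq v₁ v₂ 0 2)) = (mq w₁ w₂ 1 3) * (mq v₁ v₂ 0 3) := by
    simp only [mq]
    linear_combination (1/1 : ℚ) * hkey 0 1
  have zDE : (mzi W1 W2 1 2) * (-(mzi V1 V2 0 2)) = (mzi W1 W2 1 3) * (mzi V1 V2 0 3) := by
    have h := cDE
    simp only [mq, hV1, hV2, hW1, hW2] at h
    simp only [mzi]
    exact_mod_cast h
  have cDF : (mq w₁ w₂ 1 2) * (mq v₁ v₂ 0 1) = (mq w₁ w₂ 2 3) * (mq v₁ v₂ 0 3) := by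
    simp only [mq]
    linear_combination (1/1 : ℚ) * hkey 0 2
  have zDF : (mzi W1 W2 1 2) * (mzi V1 V2 0 1) = (mzi W1 W2 2 3) * (mzi V1 V2 0 3) := by
    have h := cDF
    simp only [mq, hV1, hV2, hW1, hW2] at h
    simp only [mzi]
    exact_mod_cast h
  have cEF : (mq w₁ w₂ 1 3) * (mq v₁ v₂ 0 1) = (mq w₁ w₂ 2 3) * (-(mq v₁ v₂ 0 2)) := by
    simp only [mq]
    linear_combination (1/1 : ℚ) * hkey 0 3
  have zEF : (mzi W1 W2 1 3) * (mzi V1 V2 0 1) = (mzi W1 W2 2 3) * (-(mzi V1 V2 0 2)) := by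
    have h := cEF
    simp only [mq, hV1, hV2, hW1, hW2] at h
    simp only [mzi]
    exact_mod_cast h
  have sA : (mzi W1 W2 0 1) ^ 2 = (mzi V1 V2 2 3) ^ 2 := by
    refine sq_eq_of_cross (mzi W1 W2 0 1) (mzi V1 V2 2 3) (mzi W1 W2 0 1) (mzi W1 W2 0 2) (mzi W1 W2 0 3) (mzi W1 W2 1 2) (mzi W1 W2 1 3) (mzi W1 W2 2 3) (mzi V1 V2 2 3) (-(mzi V1 V2 1 3)) (mzi V1 V2 1 2) (mzi V1 V2 0 3) (-(mzi V1 V2 0 2)) (mzi V1 V2 0 1) hPw hdv ?_ ?_ ?_ ?_ ?_ ?_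
    · ring
    · linear_combination zAB
    · linear_combination zAC
    · linear_combination zAD
    · linear_combination zAE
    · linear_combination zAF
  have sB : (mzi W1 W2 0 2) ^ 2 = (-(mzi V1 V2 1 3)) ^ 2 := by
    refine sq_eq_of_cross (mzi W1 W2 0 2) (-(mzi V1 V2 1 3)) (mzi W1 W2 0 1) (mzi W1 W2 0 2) (mzi W1 W2 0 3) (mzi W1 W2 1 2) (mzi W1 W2 1 3) (mzi W1 W2 2 3) (mzi V1 V2 2 3) (-(mzi V1 V2 1 3)) (mzi V1 V2 1 2) (mzi V1 V2 0 3) (-(mzi V1 V2 0 2)) (mzi V1 V2 0 1) hPw hdv ?_ ?_ ?_ ?_ ?_ ?_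
    · linear_combination -zAB
    · ring
    · linear_combination zBC
    · linear_combination zBD
    · linear_combination zBE
    · linear_combination zBF
  have sC : (mzi W1 W2 0 3) ^ 2 = (mzi V1 V2 1 2) ^ 2 := by
    refine sq_eq_of_cross (mzi W1 W2 0 3) (mzi V1 V2 1 2) (mzi W1 W2 0 1) (mzi W1 W2 0 2) (mzi W1 W2 0 3) (mzi W1 W2 1 2) (mzi W1 W2 1 3) (mzi W1 W2 2 3) (mzi V1 V2 2 3) (-(mzi V1 V2 1 3)) (mzi V1 V2 1 2) (mzi V1 V2 0 3) (-(mzi V1 V2 0 2)) (mzi V1 V2 0 1) hPw hdv ?_ ?_ ?_ ?_ ?_ ?_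
    · linear_combination -zAC
    · linear_combination -zBC
    · ring
    · linear_combination zCD
    · linear_combination zCE
    · linear_combination zCF
  have sD : (mzi W1 W2 1 2) ^ 2 = (mzi V1 V2 0 3) ^ 2 := by
    refine sq_eq_of_cross (mzi W1 W2 1 2) (mzi V1 V2 0 3) (mzi W1 W2 0 1) (mzi W1 W2 0 2) (mzi W1 W2 0 3) (mzi W1 W2 1 2) (mzi W1 W2 1 3) (mzi W1 W2 2 3) (mzi V1 V2 2 3) (-(mzi V1 V2 1 3)) (mzi V1 V2 1 2) (mzi V1 V2 0 3) (-(mzi V1 V2 0 2)) (mzi V1 V2 0 1) hPw hdv ?_ ?_ ?_ ?_ ?_ ?_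
    · linear_combination -zAD
    · linear_combination -zBD
    · linear_combination -zCD
    · ring
    · linear_combination zDE
    · linear_combination zDF
  have sE : (mzi W1 W2 1 3) ^ 2 = (-(mzi V1 V2 0 2)) ^ 2 := by
    refine sq_eq_of_cross (mzi W1 W2 1 3) (-(mzi V1 V2 0 2)) (mzi W1 W2 0 1) (mzi W1 W2 0 2) (mzi W1 W2 0 3) (mzi W1 W2 1 2) (mzi W1 W2 1 3) (mzi W1 W2 2 3) (mzi V1 V2 2 3) (-(mzi V1 V2 1 3)) (mzi V1 V2 1 2) (mzi V1 V2 0 3) (-(mzi V1 V2 0 2)) (mzi V1 V2 0 1) hPw hdv ?_ ?_ ?_ ?_ ?_ ?_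
    · linear_combination -zAE
    · linear_combination -zBE
    · linear_combination -zCE
    · linear_combination -zDE
    · ring
    · linear_combination zEF
  have sF : (mzi W1 W2 2 3) ^ 2 = (mzi V1 V2 0 1) ^ 2 := by
    refine sq_eq_of_cross (mzi W1 W2 2 3) (mzi V1 V2 0 1) (mzi W1 W2 0 1) (mzi W1 W2 0 2) (mzi W1 W2 0 3) (mzi W1 W2 1 2) (mzi W1 W2 1 3) (mzi W1 W2 2 3) (mzi V1 V2 2 3) (-(mzi V1 V2 1 3)) (mzi V1 V2 1 2) (mzi V1 V2 0 3) (-(mzi V1 V2 0 2)) (mzi V1 V2 0 1) hPw hdv ?_ ?_ ?_ ?_ ?_ ?_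
    · linear_combination -zAF
    · linear_combination -zBF
    · linear_combination -zCF
    · linear_combination -zDF
    · linear_combination -zEF
    · ring
  -- Cauchy–Binet expansions
  have gw : gramDet w₁ w₂ = mq w₁ w₂ 0 1 ^ 2 + mq w₁ w₂ 0 2 ^ 2 + mq w₁ w₂ 0 3 ^ 2
      + mq w₁ w₂ 1 2 ^ 2 + mq w₁ w₂ 1 3 ^ 2 + mq w₁ w₂ 2 3 ^ 2 := by
    simp only [gramDet, innerQ4, Fin.sum_univ_four, mq]
    ring
  have gv : gramDet v₁ v₂ = mq v₁ v₂ 0 1 ^ 2 + mq v₁ v₂ 0 2 ^ 2 + mq v₁ v₂ 0 3 ^ 2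
      + mq v₁ v₂ 1 2 ^ 2 + mq v₁ v₂ 1 3 ^ 2 + mq v₁ v₂ 2 3 ^ 2 := by
    simp only [gramDet, innerQ4, Fin.sum_univ_four, mq]
    ring
  rw [gw, gv, ← castw 0 1, ← castw 0 2, ← castw 0 3, ← castw 1 2, ← castw 1 3, ← castw 2 3,
    ← castv 0 1, ← castv 0 2, ← castv 0 3, ← castv 1 2, ← castv 1 3, ← castv 2 3]
  have hfin : (mzi W1 W2 0 1) ^ 2 + (mzi W1 W2 0 2) ^ 2 + (mzi W1 W2 0 3) ^ 2
      + (mzi W1 W2 1 2) ^ 2 + (mzi W1 W2 1 3) ^ 2 + (mzi W1 W2 2 3) ^ 2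
      = (mzi V1 V2 0 1) ^ 2 + (mzi V1 V2 0 2) ^ 2 + (mzi V1 V2 0 3) ^ 2
      + (mzi V1 V2 1 2) ^ 2 + (mzi V1 V2 1 3) ^ 2 + (mzi V1 V2 2 3) ^ 2 := by
    linear_combination sA + sB + sC + sD + sE + sF
  exact_mod_cast hfin
end

section
/- Let v₁, v₂ ∈ ℤ⁴ be such that (v₁, v₂) is a ℤ-basis of the lattice (ℚ·v₁ + ℚ·v₂) ∩ ℤ⁴. Then the associated points a₁ = a₁(v₁,v₂) and a₂ = a₂(v₁,v₂) lie in ℤ⁴, satisfy a₁ ≡ a₂ mod 2 coordinatewise, and the pair (a₁, a₂) is pair-primitive. -/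
/-!
Write `v₁ = x₀ + u`, `v₂ = y₀ + w` with `u, w` pure, and put `D = y₀ u - x₀ w`, `C = u × w`.
Then `a₁ = D - C` and `a₂ = D + C`, and the six coordinates of `D` and `C` are, up to sign, the
`2 × 2` minors of the `4 × 2` matrix with columns `v₁, v₂`. Over any commutative ring,
`re (v₂ q) • v₁ - re (v₁ q) • v₂` is a combination of `D` and `C` for every `q`, so if `D` and `C`
vanish modulo `n` then `v₁, v₂` become linearly dependent modulo `n`. Since `(v₁, v₂)` is a basis
of a saturated lattice, it stays linearly independent over `ZMod n` for every `n ≠ 0`. For an odd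
prime `p`, `a₁ ≡ a₂ ≡ 0 mod p` forces `D ≡ C ≡ 0 mod p` because `2` is invertible; and
`4 ∣ a₁ ± a₂ = 2 D, -2 C` forces `D ≡ C ≡ 0 mod 2`.
-/

open Quaternion

/-- A quaternion over `ℚ` has integer coordinates, i.e. lies in `ℤ⁴`. -/
def IsIntegerQuat (x : ℍ[ℚ]) : Prop :=
  ∃ a b c d : ℤ, x.re = a ∧ x.imI = b ∧ x.imJ = c ∧ x.imK = d

/-- `(v₁, v₂)` is a `ℤ`-basis of the lattice `L ∩ ℤ⁴`. -/
def IsZBasisQuat (L : Submodule ℚ ℍ[ℚ]) (v₁ v₂ : ℍ[ℚ]) : Prop :=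
  v₁ ∈ L ∧ v₂ ∈ L ∧ IsIntegerQuat v₁ ∧ IsIntegerQuat v₂ ∧ LinearIndependent ℚ ![v₁, v₂] ∧
    ∀ x ∈ L, IsIntegerQuat x → ∃ m n : ℤ, x = (m : ℚ) • v₁ + (n : ℚ) • v₂

/-- A pair of integer vectors `(w₁, w₂)` is *pair-primitive*: no odd prime divides all
coordinates of both `w₁` and `w₂`, and it is not the case that `4` divides all coordinates
of `w₁ + w₂` and all coordinates of `w₁ - w₂`. -/
def PairPrimitive (w₁ w₂ : ℍ[ℚ]) : Prop :=
  (∀ p : ℕ, p.Prime → p ≠ 2 →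
      ¬(IsIntegerQuat ((p : ℚ)⁻¹ • w₁) ∧ IsIntegerQuat ((p : ℚ)⁻¹ • w₂))) ∧
    ¬(IsIntegerQuat ((4 : ℚ)⁻¹ • (w₁ + w₂)) ∧ IsIntegerQuat ((4 : ℚ)⁻¹ • (w₁ - w₂)))

namespace Quaternion

variable {R S : Type*} [CommRing R] [CommRing S]

def map (f : R →+* S) (x : ℍ[R]) : ℍ[S] := ⟨f x.re, f x.imI, f x.imJ, f x.imK⟩

section

variable (f : R →+* S) (x : ℍ[R])

@[simp] theorem re_map : (map f x).re = f x.re := rfl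
@[simp] theorem imI_map : (map f x).imI = f x.imI := rfl
@[simp] theorem imJ_map : (map f x).imJ = f x.imJ := rfl
@[simp] theorem imK_map : (map f x).imK = f x.imK := rfl

def mapRingHom : ℍ[R] →+* ℍ[S] where
  toFun := map f
  map_one' := by ext <;> simp
  map_mul' x y := by ext <;> simp
  map_zero' := by ext <;> simp
  map_add' x y := by ext <;> simp

@[simp] theorem re_mapRingHom : (mapRingHom f x).re = f x.re := rfl
@[simp] theorem imI_mapRingHom : (mapRingHom f x).imI = f x.imI := rfl
@[simp] theorem imJ_mapRingHom : (mapRingHom f x).imJ = f x.imJ := rfl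
@[simp] theorem imK_mapRingHom : (mapRingHom f x).imK = f x.imK := rfl

theorem mapRingHom_star : mapRingHom f (star x) = star (mapRingHom f x) := by ext <;> simp

theorem mapRingHom_im : mapRingHom f x.im = (mapRingHom f x).im := by ext <;> simp

theorem mapRingHom_smul (r : R) : mapRingHom f (r • x) = f r • mapRingHom f x := by
  ext <;> simp

end

variable (x y q : ℍ[R])

theorem im_mul_star_add_im_star_mul :
    (x * star y).im + (star y * x).im = (2 : R) • (y.re • x.im - x.re • y.im) := by
  ext <;> simp <;> ring

theorem im_mul_star_sub_im_star_mul :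
    (x * star y).im - (star y * x).im = (-2 : R) • (x.im * y.im).im := by
  ext <;> simp <;> ring

theorem re_mul_smul_sub_re_mul_smul :
    (y * q).re • x - (x * q).re • y =
      q.re • (y.re • x.im - x.re • y.im) - ((y.re • x.im - x.re • y.im) * q.im).re
        - (q.im * (x.im * y.im).im).im := by
  ext <;> simp <;> ring

variable {x y}

theorem eq_zero_of_forall_re_mul_eq_zero (h : ∀ q : ℍ[R], (x * q).re = 0) : x = 0 := by
  -- `simp` cannot evaluate products with the structure literals `i, j, k`, so `re_mul` goes first
  let i : ℍ[R] := ⟨0, 1, 0, 0⟩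
  let j : ℍ[R] := ⟨0, 0, 1, 0⟩
  let k : ℍ[R] := ⟨0, 0, 0, 1⟩
  have hi := h i
  have hj := h j
  have hk := h k
  simp only [re_mul] at hi hj hk
  ext
  · simpa using h 1
  · simpa [i] using hi
  · simpa [j] using hj
  · simpa [k] using hk

theorem not_linearIndependent_pair [Nontrivial R] (hD : y.re • x.im = x.re • y.im)
    (hC : (x.im * y.im).im = 0) : ¬LinearIndependent R ![x, y] := by
  intro hli
  refine hli.ne_zero 0 (eq_zero_of_forall_re_mul_eq_zero fun q ↦ ?_)
  refine (hli.eq_zero_of_pair' (s := (y * q).re) (t := (x * q).re) ?_).2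
  rw [← sub_eq_zero, re_mul_smul_sub_re_mul_smul, sub_eq_zero.2 hD, hC]
  simp

theorem not_linearIndependent_pair_of_im_eq_zero [Nontrivial R] (h2 : IsUnit (2 : R))
    (h₁ : (x * star y).im = 0) (h₂ : (star y * x).im = 0) : ¬LinearIndependent R ![x, y] := by
  refine not_linearIndependent_pair ?_ ?_
  · have := im_mul_star_add_im_star_mul x y
    rwa [h₁, h₂, add_zero, eq_comm, h2.smul_eq_zero, sub_eq_zero] at this
  · have := im_mul_star_sub_im_star_mul x y
    rwa [h₁, h₂, sub_zero, eq_comm, h2.neg.smul_eq_zero] at this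

end Quaternion

local notation "ι" => Quaternion.mapRingHom (Int.castRingHom ℚ)

local notation "ρ[" n "]" => Quaternion.mapRingHom (Int.castRingHom (ZMod n))

theorem isIntegerQuat_iff_exists (x : ℍ[ℚ]) : IsIntegerQuat x ↔ ∃ z : ℍ[ℤ], ι z = x := by
  constructor
  · rintro ⟨a, b, c, d, ha, hb, hc, hd⟩
    exact ⟨⟨a, b, c, d⟩, by ext <;> simp only [ha, hb, hc, hd] <;> rfl⟩
  · rintro ⟨z, rfl⟩
    exact ⟨z.re, z.imI, z.imJ, z.imK, rfl, rfl, rfl, rfl⟩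

theorem exists_inv_mul_eq_intCast_iff {n : ℕ} (hn : n ≠ 0) (a : ℤ) :
    (∃ k : ℤ, (n : ℚ)⁻¹ * a = k) ↔ (a : ZMod n) = 0 := by
  rw [ZMod.intCast_zmod_eq_zero_iff_dvd]
  refine exists_congr fun k ↦ ?_
  rw [inv_mul_eq_iff_eq_mul₀ (Nat.cast_ne_zero.2 hn)]
  exact_mod_cast Iff.rfl

theorem isIntegerQuat_inv_smul_iff {n : ℕ} (hn : n ≠ 0) (z : ℍ[ℤ]) :
    IsIntegerQuat ((n : ℚ)⁻¹ • ι z) ↔ ρ[n] z = 0 := by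
  simp only [IsIntegerQuat, Quaternion.ext_iff]
  simp [← exists_inv_mul_eq_intCast_iff hn]

theorem isIntegerQuat_four_inv_smul_two_smul_iff (z : ℍ[ℤ]) :
    IsIntegerQuat ((4 : ℚ)⁻¹ • ι ((2 : ℤ) • z)) ↔ ρ[2] z = 0 := by
  rw [mapRingHom_smul, smul_smul,
    show (4 : ℚ)⁻¹ * Int.castRingHom ℚ 2 = ((2 : ℕ) : ℚ)⁻¹ by norm_num,
    isIntegerQuat_inv_smul_iff two_ne_zero]

theorem IsZBasisQuat.linearIndependent_zmod {z₁ z₂ : ℍ[ℤ]}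
    (h : IsZBasisQuat (Submodule.span ℚ {ι z₁, ι z₂}) (ι z₁) (ι z₂)) {n : ℕ} (hn : n ≠ 0) :
    LinearIndependent (ZMod n) ![ρ[n] z₁, ρ[n] z₂] := by
  obtain ⟨-, -, -, -, hli, hsat⟩ := h
  rw [LinearIndependent.pair_iff]
  intro s t hst
  obtain ⟨c, rfl⟩ := ZMod.intCast_surjective s
  obtain ⟨d, rfl⟩ := ZMod.intCast_surjective t
  have hint : IsIntegerQuat ((n : ℚ)⁻¹ • ι (c • z₁ + d • z₂)) := by
    rwa [isIntegerQuat_inv_smul_iff hn, map_add, map_zsmul, map_zsmul,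
      ← Int.cast_smul_eq_zsmul (ZMod n), ← Int.cast_smul_eq_zsmul (ZMod n)]
  rw [map_add, map_zsmul, map_zsmul, ← Int.cast_smul_eq_zsmul ℚ,
    ← Int.cast_smul_eq_zsmul ℚ] at hint
  have hmem : (n : ℚ)⁻¹ • ((c : ℚ) • ι z₁ + (d : ℚ) • ι z₂) ∈ Submodule.span ℚ {ι z₁, ι z₂} :=
    Submodule.smul_mem _ _ (Submodule.mem_span_pair.2 ⟨c, d, rfl⟩)
  obtain ⟨k, l, hkl⟩ := hsat _ hmem hint
  have hcoeff := hli.eq_of_pair (s := (n : ℚ)⁻¹ * c) (t := (n : ℚ)⁻¹ * d) (s' := k) (t' := l)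
    (by rw [← hkl, smul_add, smul_smul, smul_smul])
  rw [← exists_inv_mul_eq_intCast_iff hn, ← exists_inv_mul_eq_intCast_iff hn]
  exact ⟨⟨k, hcoeff.1⟩, ⟨l, hcoeff.2⟩⟩

/-- If `(v₁, v₂)` is a `ℤ`-basis of the lattice `(ℚv₁ + ℚv₂) ∩ ℤ⁴`, then the
associated points `a₁ = Im(v₁ conj v₂)` and `a₂ = Im(conj v₂ * v₁)` lie in `ℤ⁴`, are congruent
mod 2 coordinatewise, and form a pair-primitive pair. -/
theorem stmt_8 (v₁ v₂ : ℍ[ℚ])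
    (hbasis : IsZBasisQuat (Submodule.span ℚ ({v₁, v₂} : Set ℍ[ℚ])) v₁ v₂) :
    IsIntegerQuat ((v₁ * star v₂).im) ∧ IsIntegerQuat ((star v₂ * v₁).im) ∧
      IsIntegerQuat ((2 : ℚ)⁻¹ • ((v₁ * star v₂).im - (star v₂ * v₁).im)) ∧
      PairPrimitive ((v₁ * star v₂).im) ((star v₂ * v₁).im) := by
  obtain ⟨z₁, rfl⟩ := (isIntegerQuat_iff_exists v₁).1 hbasis.2.2.1
  obtain ⟨z₂, rfl⟩ := (isIntegerQuat_iff_exists v₂).1 hbasis.2.2.2.1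
  have hli {n : ℕ} (hn : n ≠ 0) := hbasis.linearIndependent_zmod hn
  simp only [← mapRingHom_star, ← map_mul, ← mapRingHom_im, ← map_sub]
  refine ⟨(isIntegerQuat_iff_exists _).2 ⟨_, rfl⟩, (isIntegerQuat_iff_exists _).2 ⟨_, rfl⟩,
    ?_, ?_, ?_⟩
  · rw [im_mul_star_sub_im_star_mul, mapRingHom_smul, smul_smul,
      show (2 : ℚ)⁻¹ * Int.castRingHom ℚ (-2) = -1 by norm_num, neg_one_smul, ← map_neg]
    exact (isIntegerQuat_iff_exists _).2 ⟨_, rfl⟩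
  · rintro p hp hp2 ⟨h₁, h₂⟩
    have := Fact.mk hp
    rw [isIntegerQuat_inv_smul_iff hp.ne_zero] at h₁ h₂
    simp only [map_mul, mapRingHom_star, mapRingHom_im] at h₁ h₂
    have h2 : (2 : ZMod p) ≠ 0 := Ring.two_ne_zero (by rwa [ZMod.ringChar_zmod_n])
    exact not_linearIndependent_pair_of_im_eq_zero h2.isUnit h₁ h₂ (hli hp.ne_zero)
  · rintro ⟨h₁, h₂⟩
    rw [← map_add, im_mul_star_add_im_star_mul, isIntegerQuat_four_inv_smul_two_smul_iff] at h₁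
    rw [← map_sub, im_mul_star_sub_im_star_mul, neg_smul, ← smul_neg,
      isIntegerQuat_four_inv_smul_two_smul_iff, map_neg, neg_eq_zero] at h₂
    simp only [map_sub, mapRingHom_smul, mapRingHom_im, map_mul, sub_eq_zero] at h₁ h₂
    exact not_linearIndependent_pair h₁ h₂ (hli two_ne_zero)
end

section
/- Let D be a squarefree positive integer and let L ∈ 𝓡_D. Let (v₁, v₂) be a ℤ-basis of L ∩ ℤ⁴ and set a = Nr(v₁), b = 2⟨v₁,v₂⟩, c = Nr(v₂) (all integers). Then gcd(a, b, c) divides 2. -/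
open Quaternion

/-! The form `a x² + b x y + c y²` with `a = Nr v₁`, `b = 2⟨v₁,v₂⟩`, `c = Nr v₂` has discriminant
`b² - 4ac = -4 disc(L) = -4D`. A common divisor `g` of `a, b, c` has `g²` dividing it, and since `D`
is squarefree, `g² ∣ 2² D` forces `g ∣ 2`. -/

theorem Nat.dvd_of_sq_dvd_sq_mul_of_squarefree {g n D : ℕ} (hD : Squarefree D)
    (h : g ^ 2 ∣ n ^ 2 * D) : g ∣ n := by
  obtain ⟨g', n', hcop, hg, hn⟩ := Nat.exists_coprime g n
  set d := Nat.gcd g n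
  rcases Nat.eq_zero_or_pos d with hd | hd
  · simp [hg, hn, hd]
  have hg'D : g' ^ 2 ∣ D := by
    have : d ^ 2 * g' ^ 2 ∣ d ^ 2 * (n' ^ 2 * D) := by
      rw [hg, hn] at h
      convert h using 1 <;> ring
    exact (hcop.pow 2 2).dvd_of_dvd_mul_left (Nat.dvd_of_mul_dvd_mul_left (by positivity) this)
  have hg' : g' = 1 := Nat.isUnit_iff.mp (hD g' (by simpa [sq] using hg'D))
  simp [hg, hn, hg']

theorem sq_dvd_discrim_of_dvd {R : Type*} [CommRing R] {g a b c : R}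
    (ha : g ∣ a) (hb : g ∣ b) (hc : g ∣ c) : g ^ 2 ∣ 4 * a * c - b ^ 2 := by
  obtain ⟨x, rfl⟩ := ha
  obtain ⟨y, rfl⟩ := hb
  obtain ⟨z, rfl⟩ := hc
  exact ⟨4 * x * z - y ^ 2, by ring⟩

theorem stmt_12_general (D : ℕ) (hDsf : Squarefree D)
    (v₁ v₂ : ℍ[ℚ])
    (hdisc : Quaternion.normSq v₁ * Quaternion.normSq v₂ - (v₁ * star v₂).re ^ 2 = (D : ℚ))
    (a b c : ℤ) (ha : (a : ℚ) = Quaternion.normSq v₁)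
    (hb : (b : ℚ) = 2 * (v₁ * star v₂).re) (hc : (c : ℚ) = Quaternion.normSq v₂) :
    Int.gcd a (Int.gcd b c : ℤ) ∣ 2 := by
  have hdiscrim : 4 * a * c - b ^ 2 = 2 ^ 2 * (D : ℤ) := by
    have : ((4 * a * c - b ^ 2 : ℤ) : ℚ) = (2 ^ 2 * (D : ℤ) : ℤ) := by
      push_cast
      rw [ha, hb, hc]
      linear_combination 4 * hdisc
    exact_mod_cast this
  set g := Int.gcd a (Int.gcd b c : ℤ)
  have hgbc : (g : ℤ) ∣ Int.gcd b c := Int.gcd_dvd_right _ _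
  have hsq : (g : ℤ) ^ 2 ∣ 2 ^ 2 * (D : ℤ) := hdiscrim ▸ sq_dvd_discrim_of_dvd
    (Int.gcd_dvd_left _ _) (hgbc.trans (Int.gcd_dvd_left _ _)) (hgbc.trans (Int.gcd_dvd_right _ _))
  exact Nat.dvd_of_sq_dvd_sq_mul_of_squarefree hDsf (by exact_mod_cast hsq)

/-- Let `D` be a squarefree positive integer, `L` a 2-dimensional
`ℚ`-subspace of `ℍ(ℚ) ≅ ℚ⁴` of discriminant `D`, and `(v₁, v₂)` a `ℤ`-basis of `L ∩ ℤ⁴`.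
With `a = Nr v₁`, `b = 2⟨v₁,v₂⟩` and `c = Nr v₂` (all integers), `gcd(a,b,c)` divides `2`. -/
theorem stmt_12 (D : ℕ) (hD : 0 < D) (hDsf : Squarefree D)
    (L : Submodule ℚ ℍ[ℚ]) (hdim : Module.finrank ℚ L = 2) (v₁ v₂ : ℍ[ℚ])
    (hbasis : IsZBasisQuat L v₁ v₂)
    (hdisc : Quaternion.normSq v₁ * Quaternion.normSq v₂ - (v₁ * star v₂).re ^ 2 = (D : ℚ))
    (a b c : ℤ) (ha : (a : ℚ) = Quaternion.normSq v₁)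
    (hb : (b : ℚ) = 2 * (v₁ * star v₂).re) (hc : (c : ℚ) = Quaternion.normSq v₂) :
    Int.gcd a (Int.gcd b c : ℤ) ∣ 2 :=
  stmt_12_general D hDsf v₁ v₂ hdisc a b c ha hb hc
end

section
/- Let p be an odd prime, d ∈ ℤ_p, and let X ∈ M₂(ℤ_p) be a matrix with trace 0 and determinant d such that not all entries of X lie in p·ℤ_p. Then there exists g ∈ GL₂(ℤ_p) with g·X·g⁻¹ = [[0, 1], [−d, 0]]. -/
open scoped MatrixGroups

lemma padic_isUnit_iff_not_dvd {p : ℕ} [Fact p.Prime] (x : ℤ_[p]) :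
    IsUnit x ↔ ¬ (p : ℤ_[p]) ∣ x := by
  rw [PadicInt.isUnit_iff, ← PadicInt.norm_lt_one_iff_dvd, not_lt]
  constructor
  · intro h; simp [h]
  · intro h; exact le_antisymm (PadicInt.norm_le_one x) h

set_option maxHeartbeats 1000000 in
lemma conj_aux {p : ℕ} [Fact p.Prime] (d : ℤ_[p]) (X : Matrix (Fin 2) (Fin 2) ℤ_[p])
    (htr : X.trace = 0) (hdet : X.det = d) (v1 v2 : ℤ_[p])
    (hu : IsUnit ((X 0 0 * v1 + X 0 1 * v2) * v2 - (X 1 0 * v1 + X 1 1 * v2) * v1)) :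
    ∃ g : GL (Fin 2) ℤ_[p],
      (g : Matrix (Fin 2) (Fin 2) ℤ_[p]) * X * ((g⁻¹ : GL (Fin 2) ℤ_[p]) :
          Matrix (Fin 2) (Fin 2) ℤ_[p]) =
        !![0, 1; -d, 0] := by
  have h11 : X 1 1 = -X 0 0 := by
    rw [Matrix.trace_fin_two] at htr; linear_combination htr
  have hd : X 0 0 * (-X 0 0) - X 0 1 * X 1 0 = d := by
    rw [← h11, ← Matrix.det_fin_two]; exact hdet
  set B : Matrix (Fin 2) (Fin 2) ℤ_[p] :=
    !![X 0 0 * v1 + X 0 1 * v2, v1; X 1 0 * v1 + X 1 1 * v2, v2] with hB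
  have hdB : IsUnit B.det := by
    rw [hB, Matrix.det_fin_two_of]
    have : (X 0 0 * v1 + X 0 1 * v2) * v2 - v1 * (X 1 0 * v1 + X 1 1 * v2)
        = (X 0 0 * v1 + X 0 1 * v2) * v2 - (X 1 0 * v1 + X 1 1 * v2) * v1 := by ring
    rw [this]; exact hu
  obtain ⟨u, huB⟩ := (Matrix.isUnit_iff_isUnit_det B).2 hdB
  have key : X * B = B * !![0, 1; -d, 0] := by
    rw [hB, Matrix.eta_fin_two X, h11, Matrix.mul_fin_two, Matrix.mul_fin_two]
    ext i j
    fin_cases i <;> fin_cases j <;> simp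
    · linear_combination (-v1) * hd
    · linear_combination (-v2) * hd
  refine ⟨u⁻¹, ?_⟩
  have hc1 : ((u⁻¹ : GL (Fin 2) ℤ_[p]) : Matrix (Fin 2) (Fin 2) ℤ_[p]) = ↑u⁻¹ := rfl
  have hc2 : (((u⁻¹ : GL (Fin 2) ℤ_[p])⁻¹ : GL (Fin 2) ℤ_[p]) :
      Matrix (Fin 2) (Fin 2) ℤ_[p]) = ↑u := by simp
  rw [hc1, hc2, huB, mul_assoc, key, ← mul_assoc, ← huB, ← Units.val_mul, inv_mul_cancel,
    Units.val_one, one_mul]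

/-- Let `p` be an odd prime, `d ∈ ℤ_p`, and let `X ∈ M₂(ℤ_p)` be a
trace-zero matrix of determinant `d` not all of whose entries lie in `p ℤ_p`.  Then `X` is
`GL₂(ℤ_p)`-conjugate to `[[0, 1], [-d, 0]]`. -/
theorem stmt_15 (p : ℕ) [hp : Fact p.Prime] (hp2 : p ≠ 2) (d : ℤ_[p])
    (X : Matrix (Fin 2) (Fin 2) ℤ_[p]) (htr : X.trace = 0) (hdet : X.det = d)
    (hX : ¬ ∀ i j, (p : ℤ_[p]) ∣ X i j) :
    ∃ g : GL (Fin 2) ℤ_[p],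
      (g : Matrix (Fin 2) (Fin 2) ℤ_[p]) * X * ((g⁻¹ : GL (Fin 2) ℤ_[p]) :
          Matrix (Fin 2) (Fin 2) ℤ_[p]) =
        !![0, 1; -d, 0] := by
  by_cases hc : (p : ℤ_[p]) ∣ X 1 0
  · by_cases hb : (p : ℤ_[p]) ∣ X 0 1
    · -- the diagonal entry must be a unit
      have h11 : X 1 1 = -X 0 0 := by
        rw [Matrix.trace_fin_two] at htr; linear_combination htr
      have ha : ¬ (p : ℤ_[p]) ∣ X 0 0 := by
        intro ha
        apply hX
        intro i j
        fin_cases i <;> fin_cases j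
        · exact ha
        · exact hb
        · exact hc
        · show (p : ℤ_[p]) ∣ X 1 1
          rw [h11]; exact dvd_neg.mpr ha
      refine conj_aux d X htr hdet 1 1 ?_
      rw [padic_isUnit_iff_not_dvd]
      intro hdvd
      have h2a : (p : ℤ_[p]) ∣ 2 * X 0 0 := by
        have he : 2 * X 0 0 = ((X 0 0 * 1 + X 0 1 * 1) * 1 - (X 1 0 * 1 + X 1 1 * 1) * 1)
            - X 0 1 + X 1 0 := by rw [h11]; ring
        rw [he]; exact dvd_add (dvd_sub hdvd hb) hc
      have h2 : ¬ (p : ℤ_[p]) ∣ 2 := by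
        rw [← PadicInt.norm_lt_one_iff_dvd,
          show ((2 : ℤ_[p])) = (((2 : ℤ) : ℤ_[p])) by norm_cast,
          PadicInt.norm_int_lt_one_iff_dvd]
        intro h
        exact hp2 ((Nat.prime_dvd_prime_iff_eq hp.out Nat.prime_two).mp (by exact_mod_cast h))
      rcases (PadicInt.prime_p (p := p)).2.2 _ _ h2a with h | h
      · exact h2 h
      · exact ha h
    · refine conj_aux d X htr hdet 0 1 ?_
      rw [padic_isUnit_iff_not_dvd]
      intro h
      apply hb
      have he : X 0 1 = (X 0 0 * 0 + X 0 1 * 1) * 1 - (X 1 0 * 0 + X 1 1 * 1) * 0 := by ring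
      rw [he]; exact h
  · refine conj_aux d X htr hdet 1 0 ?_
    rw [padic_isUnit_iff_not_dvd]
    intro h
    apply hc
    have he : X 1 0 = -((X 0 0 * 1 + X 0 1 * 0) * 0 - (X 1 0 * 1 + X 1 1 * 0) * 1) := by ring
    rw [he]; exact dvd_neg.mpr h
end

section
/- Let L be a 2-dimensional ℚ-subspace of ℚ⁴ with Λ = L ∩ ℤ⁴ and D = disc(L), and assume D mod 16 ∉ {0, 7, 12, 15} and that n = v₂(D) ≥ 1. Then the subgroup of elements of 2-power order of the glue group 𝒢(Λ) = Λ*/Λ is isomorphic, as an abelian group, to (ℤ/2ℤ) × (ℤ/2^{n−1}ℤ). -/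
theorem IsIntVec.add {x y : Fin 4 → ℚ} (hx : IsIntVec x) (hy : IsIntVec y) :
    IsIntVec (x + y) := by
  intro i
  obtain ⟨m, hm⟩ := hx i
  obtain ⟨n, hn⟩ := hy i
  exact ⟨m + n, by simp [hm, hn]⟩

theorem IsIntVec.neg {x : Fin 4 → ℚ} (hx : IsIntVec x) : IsIntVec (-x) := by
  intro i
  obtain ⟨m, hm⟩ := hx i
  exact ⟨-m, by simp [hm]⟩

theorem IsIntVec.zero : IsIntVec (0 : Fin 4 → ℚ) := fun _ => ⟨0, by simp⟩

/-- The lattice `Λ = L ∩ ℤ⁴`, as an additive subgroup of `ℚ⁴`. -/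
def latticeIn (L : Submodule ℚ (Fin 4 → ℚ)) : AddSubgroup (Fin 4 → ℚ) where
  carrier := {x | x ∈ L ∧ IsIntVec x}
  add_mem' := by
    rintro x y ⟨hxL, hx⟩ ⟨hyL, hy⟩
    exact ⟨L.add_mem hxL hyL, hx.add hy⟩
  zero_mem' := ⟨L.zero_mem, IsIntVec.zero⟩
  neg_mem' := by
    rintro x ⟨hxL, hx⟩
    exact ⟨L.neg_mem hxL, hx.neg⟩

/-- The dual lattice `Λ* = {x ∈ L : ⟨x, w⟩ ∈ ℤ for all w ∈ Λ}`, as an additive subgroup of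
`ℚ⁴`. -/
def dualLatticeIn (L : Submodule ℚ (Fin 4 → ℚ)) : AddSubgroup (Fin 4 → ℚ) where
  carrier := {x | x ∈ L ∧ ∀ w ∈ latticeIn L, ∃ m : ℤ, innerQ4 x w = m}
  add_mem' := by
    rintro x y ⟨hxL, hx⟩ ⟨hyL, hy⟩
    refine ⟨L.add_mem hxL hyL, fun w hw => ?_⟩
    obtain ⟨m, hm⟩ := hx w hw
    obtain ⟨n, hn⟩ := hy w hw
    refine ⟨m + n, ?_⟩
    simp only [innerQ4, Pi.add_apply, add_mul, Finset.sum_add_distrib] at *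
    rw [hm, hn]; push_cast; ring
  zero_mem' := ⟨L.zero_mem, fun w _ => ⟨0, by simp [innerQ4]⟩⟩
  neg_mem' := by
    rintro x ⟨hxL, hx⟩
    refine ⟨L.neg_mem hxL, fun w hw => ?_⟩
    obtain ⟨m, hm⟩ := hx w hw
    refine ⟨-m, ?_⟩
    simp only [innerQ4, Pi.neg_apply, neg_mul, Finset.sum_neg_distrib] at *
    rw [hm]; push_cast; ring
  
/-- The glue group `𝒢(Λ) = Λ*/Λ` of the lattice `Λ = L ∩ ℤ⁴`. -/
def glueGroup (L : Submodule ℚ (Fin 4 → ℚ)) : Type :=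
  ↥(dualLatticeIn L) ⧸ (latticeIn L).addSubgroupOf (dualLatticeIn L)

noncomputable instance (L : Submodule ℚ (Fin 4 → ℚ)) : AddCommGroup (glueGroup L) :=
  QuotientAddGroup.Quotient.addCommGroup _

/-
The dual basis of a `ℤ`-basis `v₁, v₂` of `Λ` identifies `Λ*/Λ` with the cokernel of the Gram
matrix `G = !![a, b; b, c]`, of determinant `D = 2ⁿ m` with `m` odd. The `2`-primary part of a
group killed by `2ⁿ m` is its quotient by `2ⁿ`, and `u ∈ Gℤ² + 2ⁿℤ²` exactly when `2ⁿ` divides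
`adj(G) u`; so it suffices to exhibit a surjection `ℤ² → ℤ/2 × ℤ/2ⁿ⁻¹` whose kernel is cut out by
that divisibility. `D mod 16 ≠ 0` gives `n ≤ 3`. For `n ≥ 2` all of `a, b, c` are even: a vector
of `ℤ⁴` of square length `≡ 0 (mod 4)` that is nonzero mod 2 is `≡ (1, 1, 1, 1)`, which rules out
an odd entry when `v₁, v₂` stay independent mod 2 and `4 ∣ D`. The 2-adic Smith forms of `G` are
then `diag(1, 2)`, `diag(2, 2)`, `diag(2, 4)` for `n = 1, 2, 3`, the surjections are explicit, and
their kernels are checked by finite computations in `ℤ/2` and `ℤ/4`.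
-/

open AddCommGroup Matrix

theorem AddEquiv.nonempty_primaryComponent_equiv {A B : Type*} [AddCommGroup A] [AddCommGroup B]
    (e : A ≃+ B) (p : ℕ) : Nonempty (primaryComponent A p ≃+ primaryComponent B p) := by
  refine ⟨(e.addSubgroupMap _).trans (AddEquiv.addSubgroupCongr ?_)⟩
  ext y
  refine ⟨fun ⟨x, ⟨k, hk⟩, hxy⟩ => ⟨k, ?_⟩, fun ⟨k, hk⟩ => ⟨e.symm y, ⟨k, ?_⟩, e.apply_symm_apply y⟩⟩
  · rw [← hxy, AddMonoidHom.coe_coe, ← map_nsmul, hk, map_zero]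
  · rw [← map_nsmul, hk, map_zero]

theorem nonempty_primaryComponent_equiv_of_ker {A B : Type*} [AddCommGroup A] [AddCommGroup B]
    {p n m : ℕ} (hm : p.Coprime m) (hA : ∀ x : A, (p ^ n * m) • x = 0) (f : A →+ B)
    (hf : Function.Surjective f) (hker : ∀ x, f x = 0 ↔ ∃ y, p ^ n • y = x) :
    Nonempty (primaryComponent A p ≃+ B) := by
  refine ⟨AddEquiv.ofBijective (f.comp (primaryComponent A p).subtype) ⟨?_, fun b => ?_⟩⟩
  · rw [injective_iff_map_eq_zero]
    rintro ⟨x, k, hk⟩ hx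
    obtain ⟨y, rfl⟩ := (hker x).1 hx
    refine Subtype.ext ((nsmul_eq_zero_iff_of_coprime (hm.pow_left k)).1 ⟨hk, ?_⟩)
    rw [smul_smul, mul_comm, hA]
  · obtain ⟨y, rfl⟩ := hf b
    obtain ⟨u, v, huv⟩ := Nat.isCoprime_iff_coprime.2 (hm.pow_left n)
    -- `v * m` inverts `m` modulo `p ^ n`, so `(v * m) • y` is the `p`-primary part of `y`
    have hy : (v * m : ℤ) • y + p ^ n • (u • y) = y := by
      rw [← natCast_zsmul, smul_smul, ← add_smul, ← one_smul ℤ y, smul_smul, mul_one]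
      congr 1
      linear_combination huv
    refine ⟨⟨(v * m : ℤ) • y, n, ?_⟩, ?_⟩
    · rw [← natCast_zsmul, smul_smul, show ((p ^ n : ℕ) : ℤ) * (v * m) = v * (p ^ n * m : ℕ) by
        push_cast; ring, mul_smul, natCast_zsmul, hA, smul_zero]
    · conv_rhs => rw [← hy]
      rw [AddMonoidHom.comp_apply, AddSubgroup.coe_subtype, map_add, (hker _).2 ⟨_, rfl⟩]
      exact (add_zero _).symm

section Cokernel

variable {ι : Type*} [Fintype ι] [DecidableEq ι]

theorem Matrix.adjugate_mulVec_mulVec (A : Matrix ι ι ℤ) (v : ι → ℤ) :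
    A.adjugate *ᵥ (A *ᵥ v) = A.det • v := by
  rw [mulVec_mulVec, adjugate_mul, smul_mulVec, one_mulVec]

theorem Matrix.forall_dvd_adjugate_mulVec_iff_exists (A : Matrix ι ι ℤ) {k m : ℤ} (hk : k ≠ 0)
    (hkm : IsCoprime k m) (hdet : A.det = k * m) (u : ι → ℤ) :
    (∀ i, k ∣ (A.adjugate *ᵥ u) i) ↔ ∃ v y, A *ᵥ v + k • y = u := by
  constructor
  · intro h
    choose z hz using h
    have hAz : A *ᵥ z = m • u := by
      refine smul_right_injective _ hk ?_
      dsimp only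
      rw [← mulVec_smul, show k • z = A.adjugate *ᵥ u from funext fun i => (hz i).symm,
        mulVec_mulVec, mul_adjugate, hdet, smul_mulVec, one_mulVec, smul_smul]
    obtain ⟨r, s, hrs⟩ := hkm
    refine ⟨s • z, r • u, ?_⟩
    rw [mulVec_smul, hAz]
    linear_combination (norm := module) hrs • u
  · rintro ⟨v, y, rfl⟩ i
    rw [mulVec_add, mulVec_smul, adjugate_mulVec_mulVec, hdet, Pi.add_apply, Pi.smul_apply,
      Pi.smul_apply, smul_eq_mul, smul_eq_mul, mul_assoc]
    exact dvd_add (dvd_mul_right _ _) (dvd_mul_right _ _)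

/-- `f` presents `B` as `ℤ^ι / {u | k ∣ adj(A) u}`. -/
def IsAdjugateQuotient {B : Type*} [AddCommGroup B] (A : Matrix ι ι ℤ) (k : ℤ)
    (f : (ι → ℤ) →+ B) : Prop :=
  Function.Surjective f ∧ ∀ u, f u = 0 ↔ ∀ i, k ∣ (A.adjugate *ᵥ u) i

theorem Matrix.nonempty_primaryComponent_cokernel_equiv {B : Type*} [AddCommGroup B]
    (A : Matrix ι ι ℤ) {p n m : ℕ} (hp : p ≠ 0) (hm : p.Coprime m) (hdet : A.det = p ^ n * m)
    {f : (ι → ℤ) →+ B} (hf : IsAdjugateQuotient A (p ^ n) f) :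
    Nonempty (primaryComponent ((ι → ℤ) ⧸ LinearMap.range A.mulVecLin) p ≃+ B) := by
  have hker := A.forall_dvd_adjugate_mulVec_iff_exists (pow_ne_zero n (Int.natCast_ne_zero.2 hp))
    (Nat.isCoprime_iff_coprime.2 (hm.pow_left n)) hdet
  have hf_range : LinearMap.range A.mulVecLin ≤ LinearMap.ker f.toIntLinearMap := by
    rintro _ ⟨v, rfl⟩
    exact (hf.2 _).2 ((hker _).2 ⟨v, 0, by rw [smul_zero, add_zero, mulVecLin_apply]⟩)
  refine nonempty_primaryComponent_equiv_of_ker (n := n) hm ?_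
    ((LinearMap.range A.mulVecLin).liftQ _ hf_range).toAddMonoidHom ?_ ?_
  · rintro ⟨u⟩
    rw [Submodule.Quotient.quot_mk_eq_mk, ← Submodule.Quotient.mk_smul,
      Submodule.Quotient.mk_eq_zero]
    refine ⟨A.adjugate *ᵥ u, ?_⟩
    rw [mulVecLin_apply, mulVec_mulVec, mul_adjugate, hdet, smul_mulVec, one_mulVec,
      ← natCast_zsmul]
    push_cast; rfl
  · rintro b
    obtain ⟨u, rfl⟩ := hf.1 b
    exact ⟨Submodule.Quotient.mk u, rfl⟩
  · rintro ⟨u⟩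
    change f u = 0 ↔ _
    rw [hf.2, hker]
    constructor
    · rintro ⟨v, y, rfl⟩
      refine ⟨Submodule.Quotient.mk y, ?_⟩
      rw [← Submodule.Quotient.mk_smul, Submodule.Quotient.quot_mk_eq_mk, Submodule.Quotient.eq]
      exact ⟨-v, by rw [mulVecLin_apply, mulVec_neg, ← natCast_zsmul]; push_cast; abel⟩
    · rintro ⟨⟨y⟩, hy⟩
      rw [Submodule.Quotient.quot_mk_eq_mk, Submodule.Quotient.quot_mk_eq_mk,
        ← Submodule.Quotient.mk_smul, Submodule.Quotient.eq] at hy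
      obtain ⟨v, hv⟩ := hy
      refine ⟨-v, y, ?_⟩
      rw [mulVecLin_apply, ← natCast_zsmul] at hv
      push_cast at hv
      rw [mulVec_neg, hv]
      abel

end Cokernel

theorem Matrix.mulVec_fin_two_of {R : Type*} [CommRing R] (p q r s : R) (v : Fin 2 → R) :
    !![p, q; r, s] *ᵥ v = ![p * v 0 + q * v 1, r * v 0 + s * v 1] := by
  ext i
  fin_cases i <;> simp [mulVec, vecHead, vecTail]

theorem IsIntVec.exists_nsmul (x : Fin 4 → ℚ) : ∃ k : ℕ, k ≠ 0 ∧ IsIntVec ((k : ℚ) • x) := by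
  refine ⟨∏ j, (x j).den, Finset.prod_ne_zero_iff.2 fun j _ => (x j).den_ne_zero, fun i => ?_⟩
  refine ⟨(∏ j ∈ Finset.univ.erase i, (x j).den) * (x i).num, ?_⟩
  rw [Pi.smul_apply, smul_eq_mul, ← Finset.prod_erase_mul _ _ (Finset.mem_univ i)]
  push_cast
  rw [mul_assoc, mul_comm _ (x i), Rat.mul_den_eq_num]

theorem IsIntVec.exists_eq_intCast {x : Fin 4 → ℚ} (hx : IsIntVec x) :
    ∃ e : Fin 4 → ℤ, x = fun i => (e i : ℚ) :=
  ⟨fun i => (hx i).choose, funext fun i => (hx i).choose_spec⟩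

theorem innerQ4_intCast (e f : Fin 4 → ℤ) :
    innerQ4 (fun i => (e i : ℚ)) (fun i => (f i : ℚ)) = ((e ⬝ᵥ f : ℤ) : ℚ) := by
  simp [innerQ4, dotProduct]

theorem innerQ4_comm (x y : Fin 4 → ℚ) : innerQ4 x y = innerQ4 y x := dotProduct_comm x y

theorem innerQ4_sub_left (x y z : Fin 4 → ℚ) :
    innerQ4 (x - y) z = innerQ4 x z - innerQ4 y z :=
  sub_dotProduct x y z

theorem innerQ4_smul_add_smul_left (α β : ℚ) (x y z : Fin 4 → ℚ) :
    innerQ4 (α • x + β • y) z = α * innerQ4 x z + β * innerQ4 y z := by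
  simp only [innerQ4, ← dotProduct.eq_1, add_dotProduct, smul_dotProduct, smul_eq_mul]

section Lattice

variable {L : Submodule ℚ (Fin 4 → ℚ)} {v₁ v₂ : Fin 4 → ℚ} {a b c : ℤ}

theorem innerQ4_smul_add_smul_gram (ha : innerQ4 v₁ v₁ = a) (hb : innerQ4 v₁ v₂ = b)
    (hc : innerQ4 v₂ v₂ = c) (α β : ℚ) :
    innerQ4 (α • v₁ + β • v₂) v₁ = α * a + β * b ∧
      innerQ4 (α • v₁ + β • v₂) v₂ = α * b + β * c := by
  rw [innerQ4_smul_add_smul_left, innerQ4_smul_add_smul_left, innerQ4_comm v₂, ha, hb, hc]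
  exact ⟨rfl, rfl⟩

theorem IsZBasisOf.exists_eq_smul_add_smul (hB : IsZBasisOf L v₁ v₂) {x : Fin 4 → ℚ}
    (hx : x ∈ L) : ∃ α β : ℚ, x = α • v₁ + β • v₂ := by
  obtain ⟨k, hk, hkx⟩ := IsIntVec.exists_nsmul x
  obtain ⟨m, n, hmn⟩ := hB.2.2.2.2.2 _ (L.smul_mem _ hx) hkx
  refine ⟨m / k, n / k, ?_⟩
  rw [div_eq_inv_mul, div_eq_inv_mul, mul_smul, mul_smul, ← smul_add, ← hmn, smul_smul,
    inv_mul_cancel₀ (Nat.cast_ne_zero.2 hk), one_smul]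

theorem IsZBasisOf.dvd_of_forall_dvd {e₁ e₂ : Fin 4 → ℤ}
    (hB : IsZBasisOf L (fun i => (e₁ i : ℚ)) (fun i => (e₂ i : ℚ))) {k s t : ℤ} (hk : k ≠ 0)
    (h : ∀ i, k ∣ s * e₁ i + t * e₂ i) : k ∣ s ∧ k ∣ t := by
  obtain ⟨hv₁, hv₂, -, -, hli, hgen⟩ := hB
  choose q hq using h
  have hqL : (fun i => (q i : ℚ)) = (s / k : ℚ) • (fun i => (e₁ i : ℚ)) +
      (t / k : ℚ) • (fun i => (e₂ i : ℚ)) := by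
    ext i
    have := congrArg (Int.cast : ℤ → ℚ) (hq i)
    push_cast at this
    simp only [Pi.add_apply, Pi.smul_apply, smul_eq_mul]
    field_simp
    linarith
  obtain ⟨m, n, hmn⟩ := hgen _ (hqL ▸ L.add_mem (L.smul_mem _ hv₁) (L.smul_mem _ hv₂))
    fun i => ⟨q i, rfl⟩
  obtain ⟨hm, hn⟩ := LinearIndependent.pair_iff.1 hli (s / k - m) (t / k - n)
    (by rw [sub_smul, sub_smul, ← add_sub_add_comm, ← hqL, ← hmn, sub_self])
  have hkQ : (k : ℚ) ≠ 0 := Int.cast_ne_zero.2 hk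
  refine ⟨⟨m, ?_⟩, ⟨n, ?_⟩⟩
  · rw [sub_eq_zero, div_eq_iff hkQ] at hm; exact_mod_cast hm.trans (mul_comm _ _)
  · rw [sub_eq_zero, div_eq_iff hkQ] at hn; exact_mod_cast hn.trans (mul_comm _ _)

theorem IsZBasisOf.eq_of_innerQ4_eq (hB : IsZBasisOf L v₁ v₂) (ha : innerQ4 v₁ v₁ = a)
    (hb : innerQ4 v₁ v₂ = b) (hc : innerQ4 v₂ v₂ = c) (hD : a * c - b ^ 2 ≠ 0)
    {x y : Fin 4 → ℚ} (hx : x ∈ L) (hy : y ∈ L)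
    (h₁ : innerQ4 x v₁ = innerQ4 y v₁) (h₂ : innerQ4 x v₂ = innerQ4 y v₂) : x = y := by
  obtain ⟨α, β, hxy⟩ := hB.exists_eq_smul_add_smul (L.sub_mem hx hy)
  obtain ⟨e₁, e₂⟩ := innerQ4_smul_add_smul_gram ha hb hc α β
  rw [← hxy, innerQ4_sub_left, sub_eq_zero.2 h₁] at e₁
  rw [← hxy, innerQ4_sub_left, sub_eq_zero.2 h₂] at e₂
  have hΔ : (a * c - b ^ 2 : ℚ) ≠ 0 := by exact_mod_cast hD
  have hα : α * (a * c - b ^ 2) = 0 := by linear_combination b * e₂ - c * e₁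
  have hβ : β * (a * c - b ^ 2) = 0 := by linear_combination b * e₁ - a * e₂
  rw [← sub_eq_zero, hxy, (mul_eq_zero.1 hα).resolve_right hΔ,
    (mul_eq_zero.1 hβ).resolve_right hΔ, zero_smul, zero_smul, add_zero]

theorem exists_dual_basis (hv₁ : v₁ ∈ L) (hv₂ : v₂ ∈ L) (ha : innerQ4 v₁ v₁ = a)
    (hb : innerQ4 v₁ v₂ = b) (hc : innerQ4 v₂ v₂ = c) (hD : a * c - b ^ 2 ≠ 0) :
    ∃ d₁ ∈ L, ∃ d₂ ∈ L, innerQ4 d₁ v₁ = 1 ∧ innerQ4 d₁ v₂ = 0 ∧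
      innerQ4 d₂ v₁ = 0 ∧ innerQ4 d₂ v₂ = 1 := by
  set Δ : ℚ := a * c - b ^ 2 with hΔdef
  have hΔ : Δ ≠ 0 := by rw [hΔdef]; exact_mod_cast hD
  have hmem (α β : ℚ) : α • v₁ + β • v₂ ∈ L := L.add_mem (L.smul_mem α hv₁) (L.smul_mem β hv₂)
  obtain ⟨h11, h12⟩ := innerQ4_smul_add_smul_gram ha hb hc (c / Δ) (-b / Δ)
  obtain ⟨h21, h22⟩ := innerQ4_smul_add_smul_gram ha hb hc (-b / Δ) (a / Δ)
  refine ⟨_, hmem (c / Δ) (-b / Δ), _, hmem (-b / Δ) (a / Δ), ?_, ?_, ?_, ?_⟩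
  · rw [h11]; field_simp; ring
  · rw [h12]; field_simp; ring
  · rw [h21]; field_simp; ring
  · rw [h22]; field_simp; ring

theorem IsZBasisOf.exists_addEquiv_dualLatticeIn (hB : IsZBasisOf L v₁ v₂)
    (ha : innerQ4 v₁ v₁ = a) (hb : innerQ4 v₁ v₂ = b) (hc : innerQ4 v₂ v₂ = c)
    (hD : a * c - b ^ 2 ≠ 0) :
    ∃ Ψ : (Fin 2 → ℤ) ≃+ dualLatticeIn L,
      ∀ u, innerQ4 (Ψ u) v₁ = u 0 ∧ innerQ4 (Ψ u) v₂ = u 1 := by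
  have ⟨hv₁, hv₂, hi₁, hi₂, _, hgen⟩ := hB
  obtain ⟨d₁, hd₁, d₂, hd₂, h11, h12, h21, h22⟩ := exists_dual_basis hv₁ hv₂ ha hb hc hD
  set Ψ := Fintype.linearCombination ℤ ![d₁, d₂]
  have hΨ (u : Fin 2 → ℤ) : Ψ u = (u 0 : ℚ) • d₁ + (u 1 : ℚ) • d₂ := by
    simp [Ψ, Fintype.linearCombination_apply, Fin.sum_univ_two, Int.cast_smul_eq_zsmul]
  have hΨL (u : Fin 2 → ℤ) : Ψ u ∈ L := by
    rw [hΨ]; exact L.add_mem (L.smul_mem _ hd₁) (L.smul_mem _ hd₂)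
  have hΨv (u : Fin 2 → ℤ) : innerQ4 (Ψ u) v₁ = u 0 ∧ innerQ4 (Ψ u) v₂ = u 1 := by
    rw [hΨ, innerQ4_smul_add_smul_left, innerQ4_smul_add_smul_left, h11, h12, h21, h22]
    constructor <;> ring
  have hΨdual (u : Fin 2 → ℤ) : Ψ u ∈ dualLatticeIn L := by
    refine ⟨hΨL u, fun w ⟨hwL, hwI⟩ => ?_⟩
    obtain ⟨m, n, rfl⟩ := hgen w hwL hwI
    refine ⟨m * u 0 + n * u 1, ?_⟩
    rw [innerQ4_comm, innerQ4_smul_add_smul_left, innerQ4_comm v₁, innerQ4_comm v₂, (hΨv u).1,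
      (hΨv u).2]
    push_cast; ring
  refine ⟨AddEquiv.ofBijective (Ψ.toAddMonoidHom.codRestrict _ hΨdual) ⟨fun u w huw => ?_,
    fun ⟨x, hxL, hx⟩ => ?_⟩, fun u => hΨv u⟩
  · have h : Ψ u = Ψ w := congrArg Subtype.val huw
    ext i
    fin_cases i
    · exact_mod_cast (hΨv u).1.symm.trans (h ▸ (hΨv w).1)
    · exact_mod_cast (hΨv u).2.symm.trans (h ▸ (hΨv w).2)
  · obtain ⟨U, hU⟩ := hx v₁ ⟨hv₁, hi₁⟩
    obtain ⟨W, hW⟩ := hx v₂ ⟨hv₂, hi₂⟩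
    refine ⟨![U, W], Subtype.ext (hB.eq_of_innerQ4_eq ha hb hc hD (hΨL _) hxL ?_ ?_)⟩
    · exact (hΨv _).1.trans hU.symm
    · exact (hΨv _).2.trans hW.symm

theorem IsZBasisOf.nonempty_glueGroup_equiv (hB : IsZBasisOf L v₁ v₂) (ha : innerQ4 v₁ v₁ = a)
    (hb : innerQ4 v₁ v₂ = b) (hc : innerQ4 v₂ v₂ = c) (hD : a * c - b ^ 2 ≠ 0) :
    Nonempty (glueGroup L ≃+ (Fin 2 → ℤ) ⧸ LinearMap.range !![a, b; b, c].mulVecLin) := by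
  have ⟨hv₁, hv₂, hi₁, hi₂, _, hgen⟩ := hB
  obtain ⟨Ψ, hΨv⟩ := hB.exists_addEquiv_dualLatticeIn ha hb hc hD
  have hΨ_gram (v : Fin 2 → ℤ) :
      (Ψ (!![a, b; b, c] *ᵥ v) : Fin 4 → ℚ) = (v 0 : ℚ) • v₁ + (v 1 : ℚ) • v₂ := by
    obtain ⟨e₁, e₂⟩ := innerQ4_smul_add_smul_gram ha hb hc (v 0) (v 1)
    refine hB.eq_of_innerQ4_eq ha hb hc hD (Ψ _).2.1 (L.add_mem (L.smul_mem _ hv₁)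
      (L.smul_mem _ hv₂)) ?_ ?_
    · rw [(hΨv _).1, e₁, mulVec_fin_two_of, cons_val_zero]; push_cast; ring
    · rw [(hΨv _).2, e₂, mulVec_fin_two_of, cons_val_one]; push_cast; ring
  refine ⟨(QuotientAddGroup.congr _ _ Ψ ?_).symm⟩
  ext ⟨x, hx⟩
  simp only [AddSubgroup.mem_addSubgroupOf, AddSubgroup.mem_map, Submodule.mem_toAddSubgroup,
    LinearMap.mem_range, mulVecLin_apply]
  constructor
  · rintro ⟨_, ⟨v, rfl⟩, hvx⟩
    have hvx' : (Ψ (!![a, b; b, c] *ᵥ v) : Fin 4 → ℚ) = x := congrArg Subtype.val hvx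
    rw [← hvx', hΨ_gram, Int.cast_smul_eq_zsmul, Int.cast_smul_eq_zsmul]
    exact (latticeIn L).add_mem ((latticeIn L).zsmul_mem ⟨hv₁, hi₁⟩ _)
      ((latticeIn L).zsmul_mem ⟨hv₂, hi₂⟩ _)
  · rintro ⟨hxL, hxI⟩
    obtain ⟨m, n, rfl⟩ := hgen x hxL hxI
    exact ⟨_, ⟨![m, n], rfl⟩, Subtype.ext (hΨ_gram _)⟩

end Lattice

theorem Int.mul_self_emod_four (x : ℤ) : x * x % 4 = x % 2 := by
  obtain ⟨k, rfl | rfl⟩ := Int.even_or_odd' x <;> ring_nf <;> omega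

-- In `ℤ⁴` a square length `≡ 0 (mod 4)` forces an even number of odd coordinates; there are
-- only four coordinates, so a vector that is nonzero mod 2 is `≡ (1, 1, 1, 1)`.
theorem not_two_dvd_of_four_dvd_dotProduct_self (g : Fin 4 → ℤ) (h4 : 4 ∣ g ⬝ᵥ g)
    (hg : ¬ ∀ i, 2 ∣ g i) (i : Fin 4) : ¬ 2 ∣ g i := by
  simp only [dotProduct, Fin.sum_univ_four] at h4
  have := Int.mul_self_emod_four (g 0)
  have := Int.mul_self_emod_four (g 1)
  have := Int.mul_self_emod_four (g 2)
  have := Int.mul_self_emod_four (g 3)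
  obtain ⟨j, hj⟩ := not_forall.1 hg
  fin_cases i <;> fin_cases j <;>
    simp only [Fin.zero_eta, Fin.mk_one, Fin.reduceFinMk, Fin.isValue, Int.two_dvd_ne_zero] at hj ⊢ <;>
    omega

theorem two_dvd_dotProduct_sub_dotProduct_self {ι : Type*} [Fintype ι] (f g : ι → ℤ)
    (hg : ∀ i, ¬ 2 ∣ g i) : 2 ∣ f ⬝ᵥ g - f ⬝ᵥ f := by
  rw [← dotProduct_sub]
  refine Finset.dvd_sum fun i _ => ?_
  rcases Int.emod_two_eq_zero_or_one (f i) with h | h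
  · exact Dvd.dvd.mul_right (Int.dvd_of_emod_eq_zero h) _
  · have := hg i
    exact Dvd.dvd.mul_left (by simp only [Pi.sub_apply]; omega) _

theorem two_dvd_dotProduct_self_of_four_dvd (f g : Fin 4 → ℤ) (hg : ¬ ∀ i, 2 ∣ g i)
    (hfg : 2 ∣ f ⬝ᵥ g) (h4 : 4 ∣ f ⬝ᵥ f * g ⬝ᵥ g - (f ⬝ᵥ g) ^ 2) : 2 ∣ f ⬝ᵥ f := by
  by_contra hf
  have hsq : 4 ∣ (f ⬝ᵥ g) ^ 2 := by
    obtain ⟨k, hk⟩ := hfg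
    exact ⟨k ^ 2, by rw [hk]; ring⟩
  have hgg : 4 ∣ g ⬝ᵥ g := by
    have hcop : IsCoprime ((2 : ℤ) ^ 2) (f ⬝ᵥ f) :=
      ((Prime.coprime_iff_not_dvd Int.prime_two).2 hf).pow_left
    exact hcop.dvd_of_dvd_mul_left (by simpa using dvd_add h4 hsq)
  have := two_dvd_dotProduct_sub_dotProduct_self f g
    (not_two_dvd_of_four_dvd_dotProduct_self g hgg hg)
  omega

theorem two_dvd_gram_of_four_dvd (e₁ e₂ : Fin 4 → ℤ)
    (hprim : ∀ s t : ℤ, (∀ i, 2 ∣ s * e₁ i + t * e₂ i) → 2 ∣ s ∧ 2 ∣ t)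
    (h4 : 4 ∣ e₁ ⬝ᵥ e₁ * e₂ ⬝ᵥ e₂ - (e₁ ⬝ᵥ e₂) ^ 2) :
    2 ∣ e₁ ⬝ᵥ e₁ ∧ 2 ∣ e₁ ⬝ᵥ e₂ ∧ 2 ∣ e₂ ⬝ᵥ e₂ := by
  have hne (s t : ℤ) (hst : ¬ (2 ∣ s ∧ 2 ∣ t)) : ¬ ∀ i, 2 ∣ (s • e₁ + t • e₂) i :=
    fun h => hst (hprim s t (by simpa using h))
  have hb : 2 ∣ e₁ ⬝ᵥ e₂ := by
    by_contra hb
    have ha : ¬ 2 ∣ e₁ ⬝ᵥ e₁ := fun ha => hb <| Int.prime_two.dvd_of_dvd_pow <|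
      (dvd_sub_right (dvd_mul_of_dvd_left ha _)).1 (dvd_trans (by norm_num) h4)
    refine ha (two_dvd_dotProduct_self_of_four_dvd e₁ (e₁ + e₂) (by simpa using hne 1 1) ?_ ?_)
    · rw [dotProduct_add]; omega
    · convert h4 using 1
      simp only [dotProduct_add, add_dotProduct, dotProduct_comm e₂ e₁]
      ring
  refine ⟨two_dvd_dotProduct_self_of_four_dvd e₁ e₂ (by simpa using hne 0 1) hb h4, hb, ?_⟩
  refine two_dvd_dotProduct_self_of_four_dvd e₂ e₁ (by simpa using hne 1 0)
    (by rwa [dotProduct_comm]) ?_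
  convert h4 using 1
  rw [dotProduct_comm e₂ e₁]
  ring

theorem forall_dvd_adjugate_gram_mulVec_iff (a b c k : ℤ) (u : Fin 2 → ℤ) :
    (∀ i, k ∣ (!![a, b; b, c].adjugate *ᵥ u) i) ↔
      k ∣ c * u 0 - b * u 1 ∧ k ∣ a * u 1 - b * u 0 := by
  simp only [Fin.forall_fin_two, adjugate_fin_two_of, mulVec_fin_two_of, cons_val_zero,
    cons_val_one, neg_mul, ← sub_eq_add_neg, neg_add_eq_sub]

theorem forall_two_mul_dvd_adjugate_gram_mulVec_iff (a b c k : ℤ) (u : Fin 2 → ℤ) :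
    (∀ i, 2 * k ∣ (!![2 * a, 2 * b; 2 * b, 2 * c].adjugate *ᵥ u) i) ↔
      k ∣ c * u 0 - b * u 1 ∧ k ∣ a * u 1 - b * u 0 := by
  rw [forall_dvd_adjugate_gram_mulVec_iff,
    show 2 * c * u 0 - 2 * b * u 1 = 2 * (c * u 0 - b * u 1) by ring,
    show 2 * a * u 1 - 2 * b * u 0 = 2 * (a * u 1 - b * u 0) by ring,
    mul_dvd_mul_iff_left two_ne_zero, mul_dvd_mul_iff_left two_ne_zero]

theorem Int.two_dvd_iff_intCast_zmod_eq_zero (x : ℤ) : 2 ∣ x ↔ (x : ZMod 2) = 0 :=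
  (ZMod.intCast_zmod_eq_zero_iff_dvd x 2).symm

theorem Int.four_dvd_iff_intCast_zmod_eq_zero (x : ℤ) : 4 ∣ x ↔ (x : ZMod 4) = 0 :=
  (ZMod.intCast_zmod_eq_zero_iff_dvd x 4).symm

theorem Int.two_dvd_iff_two_mul_intCast_zmod_four_eq_zero (x : ℤ) :
    2 ∣ x ↔ 2 * (x : ZMod 4) = 0 := by
  rw [show (2 : ZMod 4) * x = ((2 * x : ℤ) : ZMod 4) by push_cast; rfl,
    ← Int.four_dvd_iff_intCast_zmod_eq_zero]
  omega

theorem ZMod.eq_one_of_ne_zero_two : ∀ x : ZMod 2, x ≠ 0 → x = 1 := by decide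

theorem Int.intCast_zmod_two_eq_one {x : ℤ} (hx : ¬ 2 ∣ x) : (x : ZMod 2) = 1 :=
  ZMod.eq_one_of_ne_zero_two _ ((Int.two_dvd_iff_intCast_zmod_eq_zero x).not.1 hx)

theorem zmod_two_adjugate_ker_iff_of_det_eq_zero : ∀ a b c u w : ZMod 2, a * c - b ^ 2 = 0 →
    (c * u - b * w = 0 ∧ a * w - b * u = 0 ↔ c * u + a * w = 0) := by
  decide

theorem zmod_two_adjugate_ker_iff_of_det_eq_one : ∀ a b c u w : ZMod 2, a * c - b ^ 2 = 1 →
    (c * u - b * w = 0 ∧ a * w - b * u = 0 ↔ u = 0 ∧ w = 0) := by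
  decide

set_option maxRecDepth 10000 in
theorem zmod_four_adjugate_ker_iff_of_det_eq_two : ∀ a b c u w : ZMod 4, 2 * a ≠ 0 →
    a * c - b ^ 2 = 2 →
      (c * u - b * w = 0 ∧ a * w - b * u = 0 ↔ 2 * u = 0 ∧ w - a * b * u = 0) := by
  decide

def linFormMod (N : ℕ) (s t : ℤ) : (Fin 2 → ℤ) →+ ZMod N :=
  AddMonoidHom.mk' (fun u => ((s * u 0 + t * u 1 : ℤ) : ZMod N)) fun u v => by
    simp only [Pi.add_apply]; push_cast; ring

theorem linFormMod_apply (N : ℕ) (s t : ℤ) (u : Fin 2 → ℤ) :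
    linFormMod N s t u = ((s * u 0 + t * u 1 : ℤ) : ZMod N) := rfl

theorem linFormMod_eq_zero_iff (N : ℕ) (s t : ℤ) (u : Fin 2 → ℤ) :
    linFormMod N s t u = 0 ↔ (N : ℤ) ∣ s * u 0 + t * u 1 :=
  ZMod.intCast_zmod_eq_zero_iff_dvd _ _

theorem not_two_dvd_and_of_det_eq_two_mul {a b c m : ℤ} (hm : ¬ 2 ∣ m)
    (hdet : a * c - b ^ 2 = 2 * m) : ¬ (2 ∣ a ∧ 2 ∣ c) := by
  rintro ⟨⟨a', rfl⟩, ⟨c', rfl⟩⟩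
  obtain ⟨b', rfl⟩ : 2 ∣ b :=
    Int.prime_two.dvd_of_dvd_pow (show 2 ∣ b ^ 2 from ⟨2 * a' * c' - m, by linarith⟩)
  exact hm ⟨a' * c' - b' ^ 2, by linarith⟩

theorem exists_isAdjugateQuotient_of_det_eq_two_mul {a b c m : ℤ} (hm : ¬ 2 ∣ m)
    (hdet : a * c - b ^ 2 = 2 * m) :
    ∃ f : (Fin 2 → ℤ) →+ ZMod 2 × ZMod 1, IsAdjugateQuotient !![a, b; b, c] (2 ^ 1) f := by
  have hac := not_two_dvd_and_of_det_eq_two_mul hm hdet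
  refine ⟨(linFormMod 2 c a).prod 0, fun ⟨x, y⟩ => ?_, fun u => ?_⟩
  · obtain ⟨z, rfl⟩ := ZMod.intCast_surjective x
    by_cases hc : 2 ∣ c
    · refine ⟨![0, z], Prod.ext ?_ (Subsingleton.elim _ _)⟩
      simp [linFormMod_apply, Int.intCast_zmod_two_eq_one fun ha => hac ⟨ha, hc⟩]
    · refine ⟨![z, 0], Prod.ext ?_ (Subsingleton.elim _ _)⟩
      simp [linFormMod_apply, Int.intCast_zmod_two_eq_one hc]
  · have hdet2 : (a : ZMod 2) * c - b ^ 2 = 0 := by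
      have := congrArg (Int.cast : ℤ → ZMod 2) hdet
      push_cast at this
      rw [this, show (2 : ZMod 2) = 0 from rfl, zero_mul]
    rw [forall_dvd_adjugate_gram_mulVec_iff, pow_one, AddMonoidHom.prod_apply, Prod.mk_eq_zero,
      AddMonoidHom.zero_apply, and_iff_left (Subsingleton.elim _ _), linFormMod_apply,
      Int.two_dvd_iff_intCast_zmod_eq_zero, Int.two_dvd_iff_intCast_zmod_eq_zero]
    push_cast
    exact (zmod_two_adjugate_ker_iff_of_det_eq_zero _ _ _ _ _ hdet2).symm

theorem exists_isAdjugateQuotient_two_mul_of_det_odd {a b c m : ℤ} (hm : ¬ 2 ∣ m)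
    (hdet : a * c - b ^ 2 = m) :
    ∃ f : (Fin 2 → ℤ) →+ ZMod 2 × ZMod 2,
      IsAdjugateQuotient !![2 * a, 2 * b; 2 * b, 2 * c] (2 ^ 2) f := by
  refine ⟨(linFormMod 2 1 0).prod (linFormMod 2 0 1), fun ⟨x, y⟩ => ?_, fun u => ?_⟩
  · obtain ⟨z₁, rfl⟩ := ZMod.intCast_surjective x
    obtain ⟨z₂, rfl⟩ := ZMod.intCast_surjective y
    exact ⟨![z₁, z₂], by simp [linFormMod_apply]⟩
  · have hdet2 : (a : ZMod 2) * c - b ^ 2 = 1 := by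
      have := congrArg (Int.cast : ℤ → ZMod 2) hdet
      push_cast at this
      rw [this, Int.intCast_zmod_two_eq_one hm]
    rw [pow_two, forall_two_mul_dvd_adjugate_gram_mulVec_iff, AddMonoidHom.prod_apply,
      Prod.mk_eq_zero, linFormMod_apply, linFormMod_apply, Int.two_dvd_iff_intCast_zmod_eq_zero,
      Int.two_dvd_iff_intCast_zmod_eq_zero]
    push_cast
    rw [zmod_two_adjugate_ker_iff_of_det_eq_one _ _ _ _ _ hdet2]
    simp

theorem four_dvd_adjugate_iff_of_det_eq_two_mul {a b c m : ℤ} (hm : ¬ 2 ∣ m) (ha : ¬ 2 ∣ a)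
    (hdet : a * c - b ^ 2 = 2 * m) (x y : ℤ) :
    4 ∣ c * x - b * y ∧ 4 ∣ a * y - b * x ↔ 2 ∣ x ∧ 4 ∣ y - a * b * x := by
  have hdet4 : (a : ZMod 4) * c - b ^ 2 = 2 := by
    obtain ⟨k, rfl⟩ : ∃ k, m = 2 * k + 1 := ⟨m / 2, by omega⟩
    have := congrArg (Int.cast : ℤ → ZMod 4) hdet
    push_cast at this
    have h4 : (4 : ZMod 4) = 0 := by decide
    rw [this]
    linear_combination (k : ZMod 4) * h4
  simp only [Int.four_dvd_iff_intCast_zmod_eq_zero,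
    Int.two_dvd_iff_two_mul_intCast_zmod_four_eq_zero]
  push_cast
  exact zmod_four_adjugate_ker_iff_of_det_eq_two _ _ _ _ _
    ((Int.two_dvd_iff_two_mul_intCast_zmod_four_eq_zero a).not.1 ha) hdet4

theorem exists_isAdjugateQuotient_two_mul_of_det_eq_two_mul {a b c m : ℤ} (hm : ¬ 2 ∣ m)
    (hdet : a * c - b ^ 2 = 2 * m) :
    ∃ f : (Fin 2 → ℤ) →+ ZMod 2 × ZMod 4,
      IsAdjugateQuotient !![2 * a, 2 * b; 2 * b, 2 * c] (2 ^ 3) f := by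
  simp only [IsAdjugateQuotient, show (2 : ℤ) ^ 3 = 2 * 4 by norm_num,
    forall_two_mul_dvd_adjugate_gram_mulVec_iff]
  by_cases ha : 2 ∣ a
  · have hc : ¬ 2 ∣ c := fun hc => not_two_dvd_and_of_det_eq_two_mul hm hdet ⟨ha, hc⟩
    refine ⟨(linFormMod 2 0 1).prod (linFormMod 4 1 (-(c * b))), fun ⟨x, y⟩ => ?_, fun u => ?_⟩
    · obtain ⟨z₁, rfl⟩ := ZMod.intCast_surjective x
      obtain ⟨z₂, rfl⟩ := ZMod.intCast_surjective y
      exact ⟨![z₂ + c * b * z₁, z₁], by simp [linFormMod_apply]⟩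
    · rw [and_comm, four_dvd_adjugate_iff_of_det_eq_two_mul hm hc (by linear_combination hdet),
        AddMonoidHom.prod_apply, Prod.mk_eq_zero, linFormMod_eq_zero_iff, linFormMod_eq_zero_iff]
      push_cast
      ring_nf
  · refine ⟨(linFormMod 2 1 0).prod (linFormMod 4 (-(a * b)) 1), fun ⟨x, y⟩ => ?_, fun u => ?_⟩
    · obtain ⟨z₁, rfl⟩ := ZMod.intCast_surjective x
      obtain ⟨z₂, rfl⟩ := ZMod.intCast_surjective y
      exact ⟨![z₁, z₂ + a * b * z₁], by simp [linFormMod_apply]⟩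
    · rw [four_dvd_adjugate_iff_of_det_eq_two_mul hm ha hdet,
        AddMonoidHom.prod_apply, Prod.mk_eq_zero, linFormMod_eq_zero_iff, linFormMod_eq_zero_iff]
      push_cast
      ring_nf

theorem exists_isAdjugateQuotient_gram {a b c : ℤ} {n m : ℕ} (hm : ¬ 2 ∣ m) (hn1 : 1 ≤ n)
    (hn3 : n ≤ 3) (hdet : a * c - b ^ 2 = 2 ^ n * m) (heven : 2 ≤ n → 2 ∣ a ∧ 2 ∣ b ∧ 2 ∣ c) :
    ∃ f : (Fin 2 → ℤ) →+ ZMod 2 × ZMod (2 ^ (n - 1)),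
      IsAdjugateQuotient !![a, b; b, c] (2 ^ n) f := by
  have hmZ : ¬ 2 ∣ (m : ℤ) := by exact_mod_cast hm
  interval_cases n
  · exact exists_isAdjugateQuotient_of_det_eq_two_mul hmZ (by simpa using hdet)
  · obtain ⟨⟨a, rfl⟩, ⟨b, rfl⟩, ⟨c, rfl⟩⟩ := heven le_rfl
    exact exists_isAdjugateQuotient_two_mul_of_det_odd hmZ (by linarith)
  · obtain ⟨⟨a, rfl⟩, ⟨b, rfl⟩, ⟨c, rfl⟩⟩ := heven (by norm_num)
    exact exists_isAdjugateQuotient_two_mul_of_det_eq_two_mul hmZ (by linarith)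

theorem stmt_17_general (L : Submodule ℚ (Fin 4 → ℚ))
    (D : ℕ) (hdisc : ∃ v₁ v₂ : Fin 4 → ℚ, IsZBasisOf L v₁ v₂ ∧ gramDet v₁ v₂ = D)
    (hD : D % 16 ∉ ({0, 7, 12, 15} : Set ℕ))
    (n : ℕ) (hn : (n : ℕ∞) = emultiplicity 2 D) (hn1 : 1 ≤ n) :
    Nonempty ((AddCommGroup.primaryComponent (glueGroup L) 2) ≃+
      (ZMod 2 × ZMod (2 ^ (n - 1)))) := by
  obtain ⟨v₁, v₂, hB, hgram⟩ := hdisc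
  obtain ⟨e₁, rfl⟩ := hB.2.2.1.exists_eq_intCast
  obtain ⟨e₂, rfl⟩ := hB.2.2.2.1.exists_eq_intCast
  obtain ⟨⟨m, rfl⟩, hnpow⟩ := emultiplicity_eq_coe.1 hn.symm
  have hm : ¬ 2 ∣ m := fun ⟨k, hk⟩ => hnpow ⟨k, by rw [hk, pow_succ, mul_assoc]⟩
  have hm0 : m ≠ 0 := fun h => hm (h ▸ dvd_zero 2)
  have hn3 : n ≤ 3 := by
    by_contra! h
    exact hD (Or.inl (Nat.mod_eq_zero_of_dvd (dvd_mul_of_dvd_left (pow_dvd_pow 2 h) m)))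
  have hdet : e₁ ⬝ᵥ e₁ * e₂ ⬝ᵥ e₂ - (e₁ ⬝ᵥ e₂) ^ 2 = 2 ^ n * m := by
    rw [gramDet, innerQ4_intCast, innerQ4_intCast, innerQ4_intCast] at hgram
    exact_mod_cast hgram
  obtain ⟨φ⟩ := hB.nonempty_glueGroup_equiv (innerQ4_intCast _ _) (innerQ4_intCast _ _)
    (innerQ4_intCast _ _) (hdet ▸ mul_ne_zero (by positivity) (by exact_mod_cast hm0))
  obtain ⟨f, hf⟩ := exists_isAdjugateQuotient_gram hm hn1 hn3 hdet fun h2 =>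
    two_dvd_gram_of_four_dvd e₁ e₂ (fun _ _ => hB.dvd_of_forall_dvd two_ne_zero)
      (hdet ▸ dvd_mul_of_dvd_left (by exact_mod_cast pow_dvd_pow 2 h2) _)
  obtain ⟨ψ⟩ := φ.nonempty_primaryComponent_equiv 2
  refine (Matrix.nonempty_primaryComponent_cokernel_equiv _ two_ne_zero
    ((Nat.Prime.coprime_iff_not_dvd Nat.prime_two).2 hm) ?_
    (by simpa only [Nat.cast_ofNat] using hf)).map ψ.trans
  rw [det_fin_two_of, Nat.cast_ofNat, ← hdet]
  ring

/-- Let `L` be a 2-dimensional `ℚ`-subspace of `ℚ⁴` with lattice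
`Λ = L ∩ ℤ⁴` and discriminant `D`, where `D mod 16 ∉ {0, 7, 12, 15}` and `n = v₂(D) ≥ 1`.
Then the `2`-primary part of the glue group `𝒢(Λ) = Λ*/Λ` is isomorphic to
`(ℤ/2ℤ) × (ℤ/2^(n-1)ℤ)`. -/
theorem stmt_17 (L : Submodule ℚ (Fin 4 → ℚ)) (hdim : Module.finrank ℚ L = 2)
    (D : ℕ) (hdisc : ∃ v₁ v₂ : Fin 4 → ℚ, IsZBasisOf L v₁ v₂ ∧ gramDet v₁ v₂ = D)
    (hD : D % 16 ∉ ({0, 7, 12, 15} : Set ℕ))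
    (n : ℕ) (hn : (n : ℕ∞) = emultiplicity 2 D) (hn1 : 1 ≤ n) :
    Nonempty ((AddCommGroup.primaryComponent (glueGroup L) 2) ≃+
      (ZMod 2 × ZMod (2 ^ (n - 1)))) :=
  stmt_17_general L D hdisc hD n hn hn1
end
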